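/- arXiv:2204.00043 — 13 statements merged into one kernel-verified Lean document; each statement's English description precedes it below -/
import Mathlib

section
/- Suppose the measurable classifier ĥ : X → {+1, −1, ⊥} enjoys proper abstention, i.e., {x ∈ X : ĥ(x) = ⊥} ⊆ X_γ := {x ∈ X : |η(x) − 1/2| ≤ γ}. Then the randomized version č satisfies err(č) − err(h⋆) ≤ (err_γ(ĥ) − err(h⋆)) + γ·P_{x∼D_X}(x ∈ X_γ). -/
open MeasureTheory

/-!
Chow's error and the error of the randomized classifier differ only on the abstention set,
where one pays `1/2 - γ` and the other `1/2`; hence their difference is `γ` times the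
probability of abstaining, and proper abstention bounds that probability by `P(X_γ)`.
-/

lemma option_elim_bool_eq_piecewise {X β : Type*} (k : X → Option Bool) (a : β) (u v : X → β) :
    (fun x => (k x).elim a (fun b => if b then u x else v x)) =
      {x | k x = none}.piecewise (fun _ => a) ({x | k x = some true}.piecewise u v) := by
  funext x
  rcases hx : k x with _ | _ | _ <;> simp [Set.piecewise, hx]

lemma option_elim_sub_option_elim {X β : Type*} (k : X → Option β) (a b : ℝ) (F : X → β → ℝ) :
    (fun x => (k x).elim a (F x) - (k x).elim b (F x)) =
      {x | k x = none}.indicator (fun _ => a - b) := by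
  funext x
  rcases hx : k x with _ | _ <;> simp [Set.indicator, hx]

section OptionElim

variable {X : Type*} [MeasurableSpace X] {μ : Measure X}

lemma integrable_option_elim_bool {k : X → Option Bool}
    (hnone : MeasurableSet {x | k x = none}) (htrue : MeasurableSet {x | k x = some true})
    [IsFiniteMeasure μ] (a : ℝ) {u v : X → ℝ} (hu : Integrable u μ) (hv : Integrable v μ) :
    Integrable (fun x => (k x).elim a (fun b => if b then u x else v x)) μ := by
  rw [option_elim_bool_eq_piecewise]
  exact Integrable.piecewise hnone (integrable_const a).integrableOn
    (Integrable.piecewise htrue hu.integrableOn hv.integrableOn).integrableOn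

lemma integral_option_elim_sub_integral_option_elim {β : Type*} {k : X → Option β}
    (hnone : MeasurableSet {x | k x = none}) {a b : ℝ} {F : X → β → ℝ}
    (ha : Integrable (fun x => (k x).elim a (F x)) μ)
    (hb : Integrable (fun x => (k x).elim b (F x)) μ) :
    ∫ x, (k x).elim a (F x) ∂μ - ∫ x, (k x).elim b (F x) ∂μ
      = (a - b) * μ.real {x | k x = none} := by
  rw [← integral_sub ha hb, option_elim_sub_option_elim, integral_indicator_const _ hnone,
    smul_eq_mul, mul_comm]

end OptionElim

theorem stmt_3_general {X : Type*} [MeasurableSpace X] (μ : Measure X) [IsProbabilityMeasure μ]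
    (η : X → ℝ) (hη : Measurable η) (hη01 : ∀ x, η x ∈ Set.Icc (0 : ℝ) 1)
    (h : X → Option Bool)
    (hnone : MeasurableSet {x | h x = none})
    (htrue : MeasurableSet {x | h x = some true})
    (γ : ℝ) (hγ0 : 0 < γ)
    (hproper : {x | h x = none} ⊆ {x | |η x - 1 / 2| ≤ γ}) :
    (∫ x, (h x).elim (1 / 2 : ℝ) (fun b => if b then 1 - η x else η x) ∂μ)
        - (∫ x, min (η x) (1 - η x) ∂μ)
      ≤ ((∫ x, (h x).elim (1 / 2 - γ) (fun b => if b then 1 - η x else η x) ∂μ)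
            - (∫ x, min (η x) (1 - η x) ∂μ))
        + γ * (μ {x | |η x - 1 / 2| ≤ γ}).toReal := by
  have hη_int : Integrable η μ := Integrable.of_bound hη.aestronglyMeasurable 1
    (ae_of_all _ fun x => by
      rw [Real.norm_eq_abs, abs_le]
      exact ⟨by linarith [(hη01 x).1], (hη01 x).2⟩)
  have hη_compl_int : Integrable (fun x => 1 - η x) μ := (integrable_const 1).sub hη_int
  have hchow_gap := integral_option_elim_sub_integral_option_elim hnone
    (integrable_option_elim_bool hnone htrue (1 / 2) hη_compl_int hη_int)
    (integrable_option_elim_bool hnone htrue (1 / 2 - γ) hη_compl_int hη_int)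
  have habstain : μ.real {x | h x = none} ≤ μ.real {x | |η x - 1 / 2| ≤ γ} :=
    measureReal_mono hproper
  rw [← measureReal_def]
  linarith [mul_le_mul_of_nonneg_left habstain hγ0.le]

/-- **Proper abstention.** If the measurable classifier `h : X → {+1, -1, ⊥}`
(encoded as `Option Bool`) abstains only on `X_γ = {x | |η x - 1/2| ≤ γ}`, then the
randomized version `č` satisfies
`err(č) - err(h⋆) ≤ (err_γ(h) - err(h⋆)) + γ·P_{x∼D_X}(x ∈ X_γ)`. -/
theorem stmt_3 {X : Type*} [MeasurableSpace X] (μ : Measure X) [IsProbabilityMeasure μ]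
    (η : X → ℝ) (hη : Measurable η) (hη01 : ∀ x, η x ∈ Set.Icc (0 : ℝ) 1)
    (h : X → Option Bool)
    (hnone : MeasurableSet {x | h x = none})
    (htrue : MeasurableSet {x | h x = some true})
    (γ : ℝ) (hγ0 : 0 < γ) (hγ : γ < 1 / 2)
    (hproper : {x | h x = none} ⊆ {x | |η x - 1 / 2| ≤ γ}) :
    (∫ x, (h x).elim (1 / 2 : ℝ) (fun b => if b then 1 - η x else η x) ∂μ)
        - (∫ x, min (η x) (1 - η x) ∂μ)
      ≤ ((∫ x, (h x).elim (1 / 2 - γ) (fun b => if b then 1 - η x else η x) ∂μ)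
            - (∫ x, min (η x) (1 - η x) ∂μ))
        + γ * (μ {x | |η x - 1 / 2| ≤ γ}).toReal :=
  stmt_3_general μ η hη hη01 h hnone htrue γ hγ0 hproper
end

section
/- Let c > 0, β ≥ 0 and ε > 0, and set γ := (ε/(2c))^{1/(1+β)}; assume γ ∈ (0, 1/2). Suppose D_X satisfies the Tsybakov noise condition, i.e., P_{x∼D_X}(|η(x) − 1/2| ≤ τ) ≤ c·τ^β for every τ > 0, and suppose the measurable classifier ĥ : X → {+1, −1, ⊥} enjoys proper abstention with parameter γ, i.e., {x : ĥ(x) = ⊥} ⊆ {x : |η(x) − 1/2| ≤ γ}. Then the randomized version č satisfies err(č) − err(h⋆) ≤ (err_γ(ĥ) − err(h⋆)) + ε/2. -/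
/-!
Randomizing an abstention costs `1/2` instead of Chow's `1/2 - γ`, so `err(č) = err_γ(h) + γ·P(h = ⊥)`.
Proper abstention puts `{h = ⊥}` inside `{|η - 1/2| ≤ γ}`, whose mass is at most `c γ^β` by the Tsybakov
condition, and the choice of `γ` makes `γ · c γ^β = ε/2`.
-/

open MeasureTheory

namespace Chow

variable {X : Type*}

/-- Conditional risk of `h` at `x` when abstaining costs `a`: integrating it gives `err(č)` for
`a = 1/2` and Chow's `err_γ(h)` for `a = 1/2 - γ`. -/
def abstainLoss (η : X → ℝ) (a : ℝ) (h : X → Option Bool) (x : X) : ℝ :=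
  (h x).elim a (fun b => if b then 1 - η x else η x)

variable (η : X → ℝ) (h : X → Option Bool)

lemma abstainLoss_eq_ite (a : ℝ) (x : X) :
    abstainLoss η a h x =
      if h x = none then a else if h x = some true then 1 - η x else η x := by
  rcases hx : h x with _ | _ | _ <;> simp [abstainLoss, hx]

lemma abstainLoss_eq_add_indicator (a b : ℝ) :
    abstainLoss η a h = abstainLoss η b h + {x | h x = none}.indicator (fun _ => a - b) := by
  ext x
  rcases hx : h x with _ | _ <;> simp [abstainLoss, hx]

lemma abs_abstainLoss_le (hη01 : ∀ x, η x ∈ Set.Icc (0 : ℝ) 1) (a : ℝ) (x : X) :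
    |abstainLoss η a h x| ≤ |a| + 1 := by
  obtain ⟨h0, h1⟩ := hη01 x
  rcases hx : h x with _ | _ | _ <;> simp only [abstainLoss, hx, Option.elim, Bool.false_eq_true,
    if_false, if_true]
  · linarith
  all_goals rw [abs_le]; constructor <;> linarith [abs_nonneg a]

variable [MeasurableSpace X]

lemma measurable_abstainLoss (hη : Measurable η) (hnone : MeasurableSet {x | h x = none})
    (htrue : MeasurableSet {x | h x = some true}) (a : ℝ) :
    Measurable (abstainLoss η a h) := by
  simp_rw [funext (abstainLoss_eq_ite η h a)]
  exact measurable_const.ite hnone ((measurable_const.sub hη).ite htrue hη)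

lemma integrable_abstainLoss (μ : Measure X) [IsFiniteMeasure μ] (hη : Measurable η)
    (hη01 : ∀ x, η x ∈ Set.Icc (0 : ℝ) 1) (hnone : MeasurableSet {x | h x = none})
    (htrue : MeasurableSet {x | h x = some true}) (a : ℝ) :
    Integrable (abstainLoss η a h) μ :=
  (integrable_const (|a| + 1)).mono'
    (measurable_abstainLoss η h hη hnone htrue a).aestronglyMeasurable
    (ae_of_all _ (abs_abstainLoss_le η h hη01 a))

lemma integral_abstainLoss_eq (μ : Measure X) [IsFiniteMeasure μ] (hη : Measurable η)
    (hη01 : ∀ x, η x ∈ Set.Icc (0 : ℝ) 1) (hnone : MeasurableSet {x | h x = none})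
    (htrue : MeasurableSet {x | h x = some true}) (a b : ℝ) :
    ∫ x, abstainLoss η a h x ∂μ =
      ∫ x, abstainLoss η b h x ∂μ + μ.real {x | h x = none} * (a - b) := by
  rw [abstainLoss_eq_add_indicator η h a b,
    integral_add' (integrable_abstainLoss η h μ hη hη01 hnone htrue b)
      ((integrable_const _).indicator hnone),
    integral_indicator_const _ hnone, smul_eq_mul]

end Chow

lemma Real.rpow_one_div_one_add_mul_rpow {t β : ℝ} (ht : 0 ≤ t) (hβ : 0 ≤ β) :
    t ^ (1 / (1 + β)) * (t ^ (1 / (1 + β))) ^ β = t := by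
  have hβ' : 1 + β ≠ 0 := by linarith
  rw [← Real.rpow_one_add' (Real.rpow_nonneg ht _) hβ', one_div, Real.rpow_inv_rpow ht hβ']

lemma measureReal_mul_le_of_tsybakov {X : Type*} [MeasurableSpace X] (μ : Measure X)
    [IsFiniteMeasure μ] (η : X → ℝ) {S : Set X} {c β ε γ : ℝ} (hc : 0 < c) (hβ : 0 ≤ β)
    (hε : 0 < ε) (hγdef : γ = (ε / (2 * c)) ^ ((1 : ℝ) / (1 + β))) (hγ0 : 0 < γ)
    (htsybakov : ∀ τ : ℝ, 0 < τ → (μ {x | |η x - 1 / 2| ≤ τ}).toReal ≤ c * τ ^ β)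
    (hS : S ⊆ {x | |η x - 1 / 2| ≤ γ}) :
    μ.real S * γ ≤ ε / 2 :=
  calc μ.real S * γ ≤ (c * γ ^ β) * γ := by
        gcongr
        exact (measureReal_mono hS).trans (htsybakov γ hγ0)
    _ = c * (ε / (2 * c)) := by
        rw [mul_assoc, mul_comm _ γ, hγdef,
          Real.rpow_one_div_one_add_mul_rpow (by positivity) hβ]
    _ = ε / 2 := by field_simp

theorem stmt_5_general {X : Type*} [MeasurableSpace X] (μ : Measure X) [IsProbabilityMeasure μ]
    (η : X → ℝ) (hη : Measurable η) (hη01 : ∀ x, η x ∈ Set.Icc (0 : ℝ) 1)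
    (h : X → Option Bool)
    (hnone : MeasurableSet {x | h x = none})
    (htrue : MeasurableSet {x | h x = some true})
    (c β ε : ℝ) (hc : 0 < c) (hβ : 0 ≤ β) (hε : 0 < ε)
    (γ : ℝ) (hγdef : γ = (ε / (2 * c)) ^ ((1 : ℝ) / (1 + β)))
    (hγ0 : 0 < γ)
    (htsybakov : ∀ τ : ℝ, 0 < τ → (μ {x | |η x - 1 / 2| ≤ τ}).toReal ≤ c * τ ^ β)
    (hproper : {x | h x = none} ⊆ {x | |η x - 1 / 2| ≤ γ}) :
    (∫ x, (h x).elim (1 / 2 : ℝ) (fun b => if b then 1 - η x else η x) ∂μ)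
        - (∫ x, min (η x) (1 - η x) ∂μ)
      ≤ ((∫ x, (h x).elim (1 / 2 - γ) (fun b => if b then 1 - η x else η x) ∂μ)
            - (∫ x, min (η x) (1 - η x) ∂μ))
        + ε / 2 := by
  change ∫ x, Chow.abstainLoss η (1 / 2) h x ∂μ - _ ≤
    (∫ x, Chow.abstainLoss η (1 / 2 - γ) h x ∂μ - _) + _
  rw [Chow.integral_abstainLoss_eq η h μ hη hη01 hnone htrue (1 / 2) (1 / 2 - γ)]
  have hmass := measureReal_mul_le_of_tsybakov μ η hc hβ hε hγdef hγ0 htsybakov hproper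
  linarith

/-- **Tsybakov-noise conversion.** Let `c > 0`, `β ≥ 0`, `ε > 0` and set
`γ := (ε / (2c)) ^ (1 / (1 + β))`; assume `γ ∈ (0, 1/2)`.  Suppose `D_X` satisfies the
Tsybakov noise condition `P(|η - 1/2| ≤ τ) ≤ c·τ^β` for all `τ > 0`, and the measurable
classifier `h : X → {+1, -1, ⊥}` (encoded as `Option Bool`) enjoys proper abstention with
parameter `γ`.  Then the randomized version `č` satisfies
`err(č) - err(h⋆) ≤ (err_γ(h) - err(h⋆)) + ε / 2`. -/
theorem stmt_5 {X : Type*} [MeasurableSpace X] (μ : Measure X) [IsProbabilityMeasure μ]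
    (η : X → ℝ) (hη : Measurable η) (hη01 : ∀ x, η x ∈ Set.Icc (0 : ℝ) 1)
    (h : X → Option Bool)
    (hnone : MeasurableSet {x | h x = none})
    (htrue : MeasurableSet {x | h x = some true})
    (c β ε : ℝ) (hc : 0 < c) (hβ : 0 ≤ β) (hε : 0 < ε)
    (γ : ℝ) (hγdef : γ = (ε / (2 * c)) ^ ((1 : ℝ) / (1 + β)))
    (hγ0 : 0 < γ) (hγ : γ < 1 / 2)
    (htsybakov : ∀ τ : ℝ, 0 < τ → (μ {x | |η x - 1 / 2| ≤ τ}).toReal ≤ c * τ ^ β)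
    (hproper : {x | h x = none} ⊆ {x | |η x - 1 / 2| ≤ γ}) :
    (∫ x, (h x).elim (1 / 2 : ℝ) (fun b => if b then 1 - η x else η x) ∂μ)
        - (∫ x, min (η x) (1 - η x) ∂μ)
      ≤ ((∫ x, (h x).elim (1 / 2 - γ) (fun b => if b then 1 - η x else η x) ∂μ)
            - (∫ x, min (η x) (1 - η x) ∂μ))
        + ε / 2 :=
  stmt_5_general μ η hη hη01 h hnone htrue c β ε hc hβ hε γ hγdef hγ0 htsybakov hproper
end

section
/- Let (Z_t)_{t=1}^{T} be a sequence of random variables adapted to a filtration (𝔉_t) with 0 ≤ Z_t ≤ B almost surely for all t. Then for every δ ∈ (0,1), with probability at least 1 − δ, both Σ_{t=1}^{T} Z_t ≤ (3/2)·Σ_{t=1}^{T} E[Z_t | 𝔉_{t−1}] + 4B·log(2/δ) and Σ_{t=1}^{T} E[Z_t | 𝔉_{t−1}] ≤ 2·Σ_{t=1}^{T} Z_t + 8B·log(2/δ) hold. -/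
open MeasureTheory ProbabilityTheory Finset

/-!
Fix a tilt `θ` and let `c = (exp (θ B) - 1) / B` be the slope of the chord of `x ↦ exp (θ x)`
over `[0, B]`. Convexity gives `E[exp (θ Z_t) | 𝔉_{t-1}] ≤ 1 + c E[Z_t | 𝔉_{t-1}] ≤ exp (c E[Z_t | 𝔉_{t-1}])`,
so `exp (θ Σ Z_t - c Σ E[Z_t | 𝔉_{t-1}])` is a supermartingale started at `1`, and by Markov's
inequality its exponent exceeds `log (2/δ)` with probability at most `δ/2`. The tilts
`θ = ± 1/(4B)` give the two inequalities, because `exp (1/4) - 1 ≤ 3/8` and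
`1 - exp (-1/4) ≥ 1/8`; a union bound combines them.
-/

lemma exp_mul_le_one_add_mul_of_mem_Icc {B θ x : ℝ} (hB : 0 < B) (hx : x ∈ Set.Icc 0 B) :
    Real.exp (θ * x) ≤ 1 + (Real.exp (θ * B) - 1) / B * x := by
  have hxB : x / B ≤ 1 := (div_le_one hB).2 hx.2
  have h := convexOn_exp.2 (Set.mem_univ 0) (Set.mem_univ (θ * B))
    (sub_nonneg.2 hxB) (div_nonneg hx.1 hB.le) (sub_add_cancel 1 (x / B))
  have hθx : x / B * (θ * B) = θ * x := by field_simp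
  simp only [smul_eq_mul, mul_zero, Real.exp_zero, hθx] at h
  calc Real.exp (θ * x) ≤ (1 - x / B) * 1 + x / B * Real.exp (θ * B) := by simpa using h
    _ = 1 + (Real.exp (θ * B) - 1) / B * x := by field_simp; ring

lemma exp_quarter_le : Real.exp (1 / 4) ≤ 11 / 8 := by
  have h := Real.exp_bound_div_one_sub_of_interval' (x := 1 / 4) (by norm_num) (by norm_num)
  norm_num at h ⊢
  linarith

lemma exp_neg_quarter_le : Real.exp (-(1 / 4)) ≤ 7 / 8 := by
  have h : 1 / 4 + 1 ≤ Real.exp (1 / 4) := Real.add_one_le_exp _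
  have hinv : Real.exp (-(1 / 4)) * Real.exp (1 / 4) = 1 := by rw [← Real.exp_add]; simp
  nlinarith [Real.exp_pos (-(1 / 4))]

section Bounded

variable {Ω : Type*} {m m0 : MeasurableSpace Ω} {μ : Measure Ω}

lemma integrable_of_ae_mem_Icc [IsFiniteMeasure μ] {f : Ω → ℝ} {a b : ℝ}
    (hf : AEStronglyMeasurable f μ) (hab : ∀ᵐ ω ∂μ, f ω ∈ Set.Icc a b) : Integrable f μ :=
  .of_bound hf (max |a| |b|) <| by
    filter_upwards [hab] with ω h using abs_le_max_abs_abs h.1 h.2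

lemma integrable_exp_of_ae_le [IsFiniteMeasure μ] {f : Ω → ℝ} {C : ℝ}
    (hf : AEStronglyMeasurable f μ) (hC : ∀ᵐ ω ∂μ, f ω ≤ C) :
    Integrable (fun ω => Real.exp (f ω)) μ :=
  .of_bound (Real.continuous_exp.comp_aestronglyMeasurable hf) (Real.exp C) <| by
    filter_upwards [hC] with ω h
    rw [Real.norm_eq_abs, abs_of_pos (Real.exp_pos _)]
    exact Real.exp_le_exp.2 h

lemma integrable_exp_mul_of_ae_mem_Icc [IsFiniteMeasure μ] {f : Ω → ℝ} {B : ℝ}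
    (hf : AEStronglyMeasurable f μ) (hfB : ∀ᵐ ω ∂μ, f ω ∈ Set.Icc 0 B) (θ : ℝ) :
    Integrable (fun ω => Real.exp (θ * f ω)) μ :=
  integrable_exp_of_ae_le (hf.const_mul θ) (C := |θ| * B) <| by
    filter_upwards [hfB] with ω h
    nlinarith [le_abs_self θ, abs_nonneg θ, h.1, h.2]

lemma ae_condExp_mem_Icc [IsFiniteMeasure μ] (hm : m ≤ m0) {f : Ω → ℝ} {a b : ℝ}
    (hf : Integrable f μ) (hab : ∀ᵐ ω ∂μ, f ω ∈ Set.Icc a b) :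
    ∀ᵐ ω ∂μ, μ[f | m] ω ∈ Set.Icc a b := by
  have hlow : μ[fun _ => a | m] ≤ᵐ[μ] μ[f | m] :=
    condExp_mono (integrable_const a) hf (by filter_upwards [hab] with ω h using h.1)
  have hup : μ[f | m] ≤ᵐ[μ] μ[fun _ => b | m] :=
    condExp_mono hf (integrable_const b) (by filter_upwards [hab] with ω h using h.2)
  rw [condExp_const hm] at hlow hup
  filter_upwards [hlow, hup] with ω h₁ h₂ using ⟨h₁, h₂⟩

lemma condExp_exp_mul_le_one_add [IsFiniteMeasure μ] (hm : m ≤ m0) {f : Ω → ℝ} {B : ℝ}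
    (hB : 0 < B) (hf : Integrable f μ) (hfB : ∀ᵐ ω ∂μ, f ω ∈ Set.Icc 0 B) (θ : ℝ) :
    μ[fun ω => Real.exp (θ * f ω) | m]
      ≤ᵐ[μ] fun ω => 1 + (Real.exp (θ * B) - 1) / B * μ[f | m] ω := by
  set c := (Real.exp (θ * B) - 1) / B
  have hchord : (fun ω => Real.exp (θ * f ω)) ≤ᵐ[μ] (fun _ => (1 : ℝ)) + c • f := by
    filter_upwards [hfB] with ω h using exp_mul_le_one_add_mul_of_mem_Icc hB h
  have hlin : μ[(fun _ => (1 : ℝ)) + c • f | m] =ᵐ[μ] fun ω => 1 + c * μ[f | m] ω := by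
    filter_upwards [condExp_add (m := m) (integrable_const (1 : ℝ)) (hf.smul c),
      condExp_smul (m := m) c f] with ω hadd hsmul
    rw [hadd, Pi.add_apply, hsmul, condExp_const hm]
    rfl
  exact (condExp_mono (integrable_exp_mul_of_ae_mem_Icc hf.1 hfB θ)
    ((integrable_const 1).add (hf.smul c)) hchord).trans hlin.le

lemma supermartingale_exp_sum [IsFiniteMeasure μ] {ℱ : Filtration ℕ m0} {D : ℕ → Ω → ℝ}
    {C : ℝ} (hD : StronglyAdapted ℱ D) (hDC : ∀ t, ∀ᵐ ω ∂μ, D t ω ≤ C)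
    (hcond : ∀ n, μ[fun ω => Real.exp (D (n + 1) ω) | ℱ n] ≤ᵐ[μ] 1) :
    Supermartingale (fun n ω => Real.exp (∑ t ∈ Icc 1 n, D t ω)) ℱ μ := by
  set P : ℕ → Ω → ℝ := fun n ω => Real.exp (∑ t ∈ Icc 1 n, D t ω)
  have hS : StronglyAdapted ℱ fun n ω => ∑ t ∈ Icc 1 n, D t ω := fun n =>
    Finset.stronglyMeasurable_fun_sum _ fun t ht => (hD t).mono (ℱ.mono (Finset.mem_Icc.1 ht).2)
  have hP : StronglyAdapted ℱ P := fun n => Real.continuous_exp.comp_stronglyMeasurable (hS n)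
  have hPint : ∀ n, Integrable (P n) μ := fun n =>
    integrable_exp_of_ae_le (C := #(Icc 1 n) • C)
      ((hS n).mono (ℱ.le n)).aestronglyMeasurable <| by
      filter_upwards [ae_all_iff.2 hDC] with ω h
      exact Finset.sum_le_card_nsmul _ _ _ fun t _ => h t
  have hEint : ∀ n, Integrable (fun ω => Real.exp (D (n + 1) ω)) μ := fun n =>
    integrable_exp_of_ae_le ((hD (n + 1)).mono (ℱ.le _)).aestronglyMeasurable (hDC (n + 1))
  refine supermartingale_nat hP hPint fun n => ?_
  have hsplit : P (n + 1) = P n * fun ω => Real.exp (D (n + 1) ω) := by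
    ext ω
    simp only [P, Pi.mul_apply, Finset.sum_Icc_succ_top (Nat.le_add_left 1 n), Real.exp_add]
  rw [hsplit]
  filter_upwards [condExp_mul_of_stronglyMeasurable_left (hP n) (hsplit ▸ hPint (n + 1))
    (hEint n), hcond n] with ω hpull hle
  rw [hpull, Pi.mul_apply]
  exact mul_le_of_le_one_right (Real.exp_pos _).le hle

lemma measureReal_setOf_mono_ae [IsFiniteMeasure μ] {p q : Ω → Prop}
    (h : ∀ᵐ ω ∂μ, p ω → q ω) : μ.real {ω | p ω} ≤ μ.real {ω | q ω} :=
  ENNReal.toReal_mono (measure_ne_top _ _) (measure_mono_ae h)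

lemma ofReal_one_sub_le_measure_setOf_and [IsProbabilityMeasure μ] {p q : Ω → Prop} {a b : ℝ}
    (hp : μ.real {ω | ¬ p ω} ≤ a) (hq : μ.real {ω | ¬ q ω} ≤ b) :
    ENNReal.ofReal (1 - (a + b)) ≤ μ {ω | p ω ∧ q ω} := by
  refine ENNReal.ofReal_le_of_le_toReal ?_
  have hcover : Set.univ ⊆ {ω | p ω ∧ q ω} ∪ ({ω | ¬ p ω} ∪ {ω | ¬ q ω}) := fun ω _ => by
    by_cases hpω : p ω <;> by_cases hqω : q ω <;> simp [hpω, hqω]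
  have hunion := calc (1 : ℝ) = μ.real Set.univ := probReal_univ.symm
    _ ≤ μ.real ({ω | p ω ∧ q ω} ∪ ({ω | ¬ p ω} ∪ {ω | ¬ q ω})) := measureReal_mono hcover
    _ ≤ μ.real {ω | p ω ∧ q ω} + (μ.real {ω | ¬ p ω} + μ.real {ω | ¬ q ω}) :=
      (measureReal_union_le _ _).trans (add_le_add_right (measureReal_union_le _ _) _)
  change 1 - (a + b) ≤ μ.real _
  linarith

end Bounded

section TiltedIncrement

variable {Ω : Type*} {m0 : MeasurableSpace Ω} {μ : Measure Ω}
  {ℱ : Filtration ℕ m0} {Z : ℕ → Ω → ℝ} {B : ℝ}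

noncomputable def tiltedIncrement (μ : Measure Ω) (ℱ : Filtration ℕ m0) (Z : ℕ → Ω → ℝ)
    (B θ : ℝ) (t : ℕ) (ω : Ω) : ℝ :=
  θ * Z t ω - (Real.exp (θ * B) - 1) / B * μ[Z t | ℱ (t - 1)] ω

lemma stronglyAdapted_tiltedIncrement (hZ : ∀ t, Measurable[ℱ t] (Z t)) (θ : ℝ) :
    StronglyAdapted ℱ (tiltedIncrement μ ℱ Z B θ) := fun t =>
  ((hZ t).stronglyMeasurable.const_mul θ).sub <|
    (stronglyMeasurable_condExp.mono (ℱ.mono (Nat.sub_le t 1))).const_mul _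

lemma ae_sum_condExp_nonneg (hZ : ∀ t, ∀ᵐ ω ∂μ, 0 ≤ Z t ω) (n : ℕ) :
    ∀ᵐ ω ∂μ, 0 ≤ ∑ t ∈ Icc 1 n, μ[Z t | ℱ (t - 1)] ω := by
  filter_upwards [ae_all_iff.2 fun t => condExp_nonneg (m := ℱ (t - 1)) (f := Z t) (hZ t)]
    with ω h
  exact Finset.sum_nonneg fun t _ => h t

lemma integrable_of_adapted_of_ae_mem_Icc [IsFiniteMeasure μ] (hZ : ∀ t, Measurable[ℱ t] (Z t))
    (hbdd : ∀ t, ∀ᵐ ω ∂μ, Z t ω ∈ Set.Icc 0 B) (t : ℕ) : Integrable (Z t) μ :=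
  integrable_of_ae_mem_Icc ((hZ t).mono (ℱ.le t) le_rfl).aestronglyMeasurable (hbdd t)

lemma tiltedIncrement_le [IsFiniteMeasure μ] (hZ : ∀ t, Measurable[ℱ t] (Z t))
    (hbdd : ∀ t, ∀ᵐ ω ∂μ, Z t ω ∈ Set.Icc 0 B) (θ : ℝ) (t : ℕ) :
    ∀ᵐ ω ∂μ, tiltedIncrement μ ℱ Z B θ t ω ≤ (|θ| + |(Real.exp (θ * B) - 1) / B|) * B := by
  filter_upwards [hbdd t, ae_condExp_mem_Icc (ℱ.le (t - 1))
    (integrable_of_adapted_of_ae_mem_Icc hZ hbdd t) (hbdd t)] with ω hz hg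
  simp only [tiltedIncrement]
  nlinarith [le_abs_self θ, neg_abs_le ((Real.exp (θ * B) - 1) / B), abs_nonneg θ,
    abs_nonneg ((Real.exp (θ * B) - 1) / B), hz.1, hz.2, hg.1, hg.2]

lemma condExp_exp_tiltedIncrement_le_one [IsFiniteMeasure μ] (hB : 0 < B)
    (hZ : ∀ t, Measurable[ℱ t] (Z t)) (hbdd : ∀ t, ∀ᵐ ω ∂μ, Z t ω ∈ Set.Icc 0 B)
    (θ : ℝ) (n : ℕ) :
    μ[fun ω => Real.exp (tiltedIncrement μ ℱ Z B θ (n + 1) ω) | ℱ n] ≤ᵐ[μ] 1 := by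
  set c := (Real.exp (θ * B) - 1) / B
  set G := μ[Z (n + 1) | ℱ n]
  have hZint := integrable_of_adapted_of_ae_mem_Icc hZ hbdd (n + 1)
  have hsplit : (fun ω => Real.exp (tiltedIncrement μ ℱ Z B θ (n + 1) ω))
      = (fun ω => Real.exp (-(c * G ω))) * fun ω => Real.exp (θ * Z (n + 1) ω) := by
    ext ω
    simp only [tiltedIncrement, Pi.mul_apply, ← Real.exp_add, Nat.add_sub_cancel]
    congr 1
    ring
  have hint : Integrable (fun ω => Real.exp (tiltedIncrement μ ℱ Z B θ (n + 1) ω)) μ :=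
    integrable_exp_of_ae_le
      (((stronglyAdapted_tiltedIncrement hZ θ) (n + 1)).mono (ℱ.le _)).aestronglyMeasurable
      (tiltedIncrement_le hZ hbdd θ (n + 1))
  have hGm : StronglyMeasurable[ℱ n] fun ω => Real.exp (-(c * G ω)) :=
    Real.continuous_exp.comp_stronglyMeasurable (stronglyMeasurable_condExp.const_mul c).neg
  rw [hsplit]
  filter_upwards [condExp_mul_of_stronglyMeasurable_left hGm (hsplit ▸ hint)
      (integrable_exp_mul_of_ae_mem_Icc hZint.1 (hbdd (n + 1)) θ),
    condExp_exp_mul_le_one_add (ℱ.le n) hB hZint (hbdd (n + 1)) θ] with ω hpull hchord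
  rw [hpull, Pi.mul_apply, Pi.one_apply]
  calc Real.exp (-(c * G ω)) * μ[fun ω => Real.exp (θ * Z (n + 1) ω) | ℱ n] ω
      ≤ Real.exp (-(c * G ω)) * Real.exp (c * G ω) :=
        mul_le_mul_of_nonneg_left (hchord.trans (by linarith [Real.add_one_le_exp (c * G ω)]))
          (Real.exp_pos _).le
    _ = 1 := by rw [← Real.exp_add, neg_add_cancel, Real.exp_zero]

lemma measureReal_tilted_ge_le_exp_neg [IsProbabilityMeasure μ] (hB : 0 < B)
    (hZ : ∀ t, Measurable[ℱ t] (Z t)) (hbdd : ∀ t, ∀ᵐ ω ∂μ, Z t ω ∈ Set.Icc 0 B)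
    (θ ε : ℝ) (n : ℕ) :
    μ.real {ω | ε ≤ θ * ∑ t ∈ Icc 1 n, Z t ω
      - (Real.exp (θ * B) - 1) / B * ∑ t ∈ Icc 1 n, μ[Z t | ℱ (t - 1)] ω} ≤ Real.exp (-ε) := by
  set W : Ω → ℝ := fun ω => ∑ t ∈ Icc 1 n, tiltedIncrement μ ℱ Z B θ t ω
  have hW : ∀ ω, W ω = θ * ∑ t ∈ Icc 1 n, Z t ω
      - (Real.exp (θ * B) - 1) / B * ∑ t ∈ Icc 1 n, μ[Z t | ℱ (t - 1)] ω := fun ω => by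
    simp only [W, tiltedIncrement, Finset.sum_sub_distrib, Finset.mul_sum]
  have hM := supermartingale_exp_sum (stronglyAdapted_tiltedIncrement hZ θ)
    (tiltedIncrement_le hZ hbdd θ) (condExp_exp_tiltedIncrement_le_one hB hZ hbdd θ)
  have hint : Integrable (fun ω => Real.exp (1 * W ω)) μ := by simpa using hM.integrable n
  have hmgf : mgf W μ 1 ≤ 1 := by
    simpa [mgf] using hM.setIntegral_le (Nat.zero_le n) MeasurableSet.univ
  simp only [← hW]
  calc μ.real {ω | ε ≤ W ω} ≤ Real.exp (-1 * ε) * mgf W μ 1 :=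
        measure_ge_le_exp_mul_mgf ε zero_le_one hint
    _ ≤ Real.exp (-ε) := by
        simpa using mul_le_of_le_one_right (Real.exp_pos (-ε)).le hmgf

lemma measureReal_sum_gt_le [IsProbabilityMeasure μ] (hB : 0 < B)
    (hZ : ∀ t, Measurable[ℱ t] (Z t)) (hbdd : ∀ t, ∀ᵐ ω ∂μ, Z t ω ∈ Set.Icc 0 B) (L : ℝ) (n : ℕ) :
    μ.real {ω | ¬ ∑ t ∈ Icc 1 n, Z t ω
      ≤ 3 / 2 * ∑ t ∈ Icc 1 n, μ[Z t | ℱ (t - 1)] ω + 4 * B * L} ≤ Real.exp (-L) := by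
  refine le_trans (measureReal_setOf_mono_ae ?_)
    (measureReal_tilted_ge_le_exp_neg hB hZ hbdd (1 / (4 * B)) L n)
  have hθB : 1 / (4 * B) * B = 1 / 4 := by field_simp
  filter_upwards [ae_sum_condExp_nonneg (fun t => by filter_upwards [hbdd t] with ω h using h.1) n]
    with ω hV hbad
  rw [not_le] at hbad
  rw [hθB]
  set S := ∑ t ∈ Icc 1 n, Z t ω
  set V := ∑ t ∈ Icc 1 n, μ[Z t | ℱ (t - 1)] ω
  have hid : 1 / (4 * B) * S - (Real.exp (1 / 4) - 1) / B * V - L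
      = ((S - 3 / 2 * V - 4 * B * L) + (3 / 2 - 4 * (Real.exp (1 / 4) - 1)) * V) / (4 * B) := by
    field_simp
    ring
  have hnum : 0 ≤ (S - 3 / 2 * V - 4 * B * L) + (3 / 2 - 4 * (Real.exp (1 / 4) - 1)) * V := by
    nlinarith [exp_quarter_le]
  linarith [div_nonneg hnum (by positivity : (0 : ℝ) ≤ 4 * B)]

lemma measureReal_sum_condExp_gt_le [IsProbabilityMeasure μ] (hB : 0 < B)
    (hZ : ∀ t, Measurable[ℱ t] (Z t)) (hbdd : ∀ t, ∀ᵐ ω ∂μ, Z t ω ∈ Set.Icc 0 B) (L : ℝ) (n : ℕ) :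
    μ.real {ω | ¬ ∑ t ∈ Icc 1 n, μ[Z t | ℱ (t - 1)] ω
      ≤ 2 * ∑ t ∈ Icc 1 n, Z t ω + 8 * B * L} ≤ Real.exp (-L) := by
  refine le_trans (measureReal_setOf_mono_ae ?_)
    (measureReal_tilted_ge_le_exp_neg hB hZ hbdd (-(1 / (4 * B))) L n)
  have hθB : -(1 / (4 * B)) * B = -(1 / 4) := by field_simp
  filter_upwards [ae_sum_condExp_nonneg (fun t => by filter_upwards [hbdd t] with ω h using h.1) n]
    with ω hV hbad
  rw [not_le] at hbad
  rw [hθB]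
  set S := ∑ t ∈ Icc 1 n, Z t ω
  set V := ∑ t ∈ Icc 1 n, μ[Z t | ℱ (t - 1)] ω
  have hid : -(1 / (4 * B)) * S - (Real.exp (-(1 / 4)) - 1) / B * V - L
      = ((V - 2 * S - 8 * B * L) + (7 - 8 * Real.exp (-(1 / 4))) * V) / (8 * B) := by
    field_simp
    ring
  have hnum : 0 ≤ (V - 2 * S - 8 * B * L) + (7 - 8 * Real.exp (-(1 / 4))) * V := by
    nlinarith [exp_neg_quarter_le]
  linarith [div_nonneg hnum (by positivity : (0 : ℝ) ≤ 8 * B)]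

end TiltedIncrement

/-- Two-sided multiplicative martingale concentration (a consequence of Freedman's
inequality): for an adapted sequence `(Z_t)` with `0 ≤ Z_t ≤ B` a.s., with probability at
least `1 - δ`, both
`Σ_{t=1}^T Z_t ≤ (3/2)·Σ_{t=1}^T E[Z_t | 𝔉_{t-1}] + 4B·log(2/δ)` and
`Σ_{t=1}^T E[Z_t | 𝔉_{t-1}] ≤ 2·Σ_{t=1}^T Z_t + 8B·log(2/δ)` hold. -/
theorem stmt_8 {Ω : Type*} {m0 : MeasurableSpace Ω}
    (μ : Measure Ω) [IsProbabilityMeasure μ]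
    (ℱ : Filtration ℕ m0) (T : ℕ) (B : ℝ) (hB : 0 < B)
    (Z : ℕ → Ω → ℝ) (hadapt : ∀ t, Measurable[ℱ t] (Z t))
    (hbdd : ∀ t, ∀ᵐ ω ∂μ, Z t ω ∈ Set.Icc 0 B)
    (δ : ℝ) (hδ : δ ∈ Set.Ioo (0 : ℝ) 1) :
    ENNReal.ofReal (1 - δ) ≤
      μ {ω | (∑ t ∈ Finset.Icc 1 T, Z t ω
              ≤ (3 / 2) * (∑ t ∈ Finset.Icc 1 T, (μ[Z t | ℱ (t - 1)]) ω)
                + 4 * B * Real.log (2 / δ))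
           ∧ ((∑ t ∈ Finset.Icc 1 T, (μ[Z t | ℱ (t - 1)]) ω)
              ≤ 2 * (∑ t ∈ Finset.Icc 1 T, Z t ω) + 8 * B * Real.log (2 / δ))} := by
  have htail : Real.exp (-Real.log (2 / δ)) = δ / 2 := by
    rw [Real.exp_neg, Real.exp_log (div_pos two_pos hδ.1), inv_div]
  have h := ofReal_one_sub_le_measure_setOf_and
    (htail ▸ measureReal_sum_gt_le hB hadapt hbdd (Real.log (2 / δ)) T)
    (htail ▸ measureReal_sum_condExp_gt_le hB hadapt hbdd (Real.log (2 / δ)) T)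
  rwa [add_halves] at h
end

section
/- Let M ∈ ℕ, τ_0 := 0 and τ_m := 2^m for m ∈ {1,…,M}, and T := τ_M. Let F be a set of functions X → [0,1] containing f⋆, and let x_t ∈ X, y_t ∈ [0,1], Q_t ∈ {0,1} for t ∈ [T] be given. Set M_t(f) := Q_t·((f(x_t) − y_t)² − (f⋆(x_t) − y_t)²), and let e_t : F → [0, ∞) be nonnegative functions. Assume, for a constant C > 0, that for every f ∈ F and every 1 ≤ τ ≤ τ′ ≤ T: Σ_{t=τ}^{τ′} M_t(f) ≤ (3/2)·Σ_{t=τ}^{τ′} e_t(f) + C and Σ_{t=τ}^{τ′} e_t(f) ≤ 2·Σ_{t=τ}^{τ′} M_t(f) + C. Define R̂_m(f) := Σ_{t=1}^{τ_{m−1}} Q_t(f(x_t) − y_t)², let f̂_m ∈ F be a minimizer of R̂_m over F (assumed to exist), set β_m := (M − m + 1)·C, and F_m := {f ∈ F : R̂_m(f) ≤ R̂_m(f̂_m) + β_m}. Then: (1) f⋆ ∈ F_m for every m ∈ [M]; (2) Σ_{t=1}^{τ_{m−1}} e_t(f) ≤ 2β_m + C for every f ∈ F_m; (3) F_{m+1}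 ⊆ F_m for every m ∈ [M−1]. -/
/-!
The second concentration inequality together with `e_t ≥ 0` says that on every window of rounds
the excess empirical loss of any `f ∈ F` over `f⋆` is at least `-C/2`. Taking the window to be a
whole prefix makes `f⋆` a `C/2`-approximate empirical risk minimiser, which gives (1) and, via the
second inequality again, (2). Splitting the prefix `[1, τ_m]` at `τ_{m-1}` shows that excess loss
grows by at most `C/2` from one epoch to the next; since `β_m = β_{m+1} + C`, this yields (3).
-/

open Finset

section Concentration

variable {e g : ℕ → ℝ} {C : ℝ} {T : ℕ}

theorem neg_half_le_sum_Icc_of_concentration (he : ∀ t, 0 ≤ e t) (hC : 0 ≤ C)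
    (hconc : ∀ τ τ', 1 ≤ τ → τ ≤ τ' → τ' ≤ T →
      ∑ t ∈ Icc τ τ', e t ≤ 2 * ∑ t ∈ Icc τ τ', g t + C)
    {a b : ℕ} (ha : 1 ≤ a) (hb : b ≤ T) :
    -(C / 2) ≤ ∑ t ∈ Icc a b, g t := by
  by_cases hab : a ≤ b
  · have he_sum : 0 ≤ ∑ t ∈ Icc a b, e t := sum_nonneg fun t _ => he t
    linarith [hconc a b ha hab hb]
  · rw [Icc_eq_empty hab, sum_empty]
    linarith

theorem sum_Icc_one_le_of_concentration (hC : 0 ≤ C)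
    (hconc : ∀ τ τ', 1 ≤ τ → τ ≤ τ' → τ' ≤ T →
      ∑ t ∈ Icc τ τ', e t ≤ 2 * ∑ t ∈ Icc τ τ', g t + C)
    {n : ℕ} (hn : n ≤ T) :
    ∑ t ∈ Icc 1 n, e t ≤ 2 * ∑ t ∈ Icc 1 n, g t + C := by
  rcases Nat.eq_zero_or_pos n with rfl | hn0
  · simpa using hC
  · exact hconc 1 n le_rfl hn0 hn

theorem sum_Icc_one_le_sum_Icc_one_add_half (he : ∀ t, 0 ≤ e t) (hC : 0 ≤ C)
    (hconc : ∀ τ τ', 1 ≤ τ → τ ≤ τ' → τ' ≤ T →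
      ∑ t ∈ Icc τ τ', e t ≤ 2 * ∑ t ∈ Icc τ τ', g t + C)
    {a b : ℕ} (hab : a ≤ b) (hb : b ≤ T) :
    ∑ t ∈ Icc 1 a, g t ≤ ∑ t ∈ Icc 1 b, g t + C / 2 := by
  have hsplit : ∑ t ∈ Icc 1 a, g t + ∑ t ∈ Icc (a + 1) b, g t = ∑ t ∈ Icc 1 b, g t := by
    simp only [Icc_add_one_left_eq_Ioc]
    exact sum_Ioc_consecutive g (Nat.zero_le a) hab
  linarith [neg_half_le_sum_Icc_of_concentration he hC hconc (Nat.le_add_left 1 a) hb]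

end Concentration

section EmpiricalRisk

variable {α : Type*} {ℓ e : ℕ → α → ℝ} {fstar : α} {C : ℝ} {T n : ℕ}

def cumLoss (ℓ : ℕ → α → ℝ) (n : ℕ) (f : α) : ℝ := ∑ t ∈ Icc 1 n, ℓ t f

theorem sum_Icc_one_sub_eq_cumLoss_sub (ℓ : ℕ → α → ℝ) (n : ℕ) (f f' : α) :
    ∑ t ∈ Icc 1 n, (ℓ t f - ℓ t f') = cumLoss ℓ n f - cumLoss ℓ n f' :=
  sum_sub_distrib _ _

def ExcessLossConcentration (ℓ e : ℕ → α → ℝ) (fstar f : α) (T : ℕ) (C : ℝ) : Prop :=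
  ∀ τ τ', 1 ≤ τ → τ ≤ τ' → τ' ≤ T →
    ∑ t ∈ Icc τ τ', e t f ≤ 2 * ∑ t ∈ Icc τ τ', (ℓ t f - ℓ t fstar) + C

theorem cumLoss_fstar_le_add_half {f : α} (he : ∀ t, 0 ≤ e t f) (hC : 0 ≤ C)
    (hf : ExcessLossConcentration ℓ e fstar f T C) (hn : n ≤ T) :
    cumLoss ℓ n fstar ≤ cumLoss ℓ n f + C / 2 := by
  have h := neg_half_le_sum_Icc_of_concentration he hC hf le_rfl hn
  rw [sum_Icc_one_sub_eq_cumLoss_sub] at h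
  linarith

theorem sum_Icc_one_le_two_mul_add {f fhat : α} {β : ℝ} (hC : 0 ≤ C)
    (hf : ExcessLossConcentration ℓ e fstar f T C) (hn : n ≤ T)
    (hmin : cumLoss ℓ n fhat ≤ cumLoss ℓ n fstar)
    (hβ : cumLoss ℓ n f ≤ cumLoss ℓ n fhat + β) :
    ∑ t ∈ Icc 1 n, e t f ≤ 2 * β + C := by
  have h := sum_Icc_one_le_of_concentration hC hf hn
  rw [sum_Icc_one_sub_eq_cumLoss_sub] at h
  linarith

theorem cumLoss_le_of_cumLoss_le_of_le {f fhat fhat' : α} {β : ℝ} {a b : ℕ}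
    (he : ∀ t, 0 ≤ e t f) (he' : ∀ t, 0 ≤ e t fhat) (hC : 0 ≤ C)
    (hf : ExcessLossConcentration ℓ e fstar f T C)
    (hfhat : ExcessLossConcentration ℓ e fstar fhat T C)
    (hab : a ≤ b) (hb : b ≤ T) (hmin : cumLoss ℓ b fhat' ≤ cumLoss ℓ b fstar)
    (hβ : cumLoss ℓ b f ≤ cumLoss ℓ b fhat' + β) :
    cumLoss ℓ a f ≤ cumLoss ℓ a fhat + (β + C) := by
  have hgrowth := sum_Icc_one_le_sum_Icc_one_add_half he hC hf hab hb
  rw [sum_Icc_one_sub_eq_cumLoss_sub, sum_Icc_one_sub_eq_cumLoss_sub] at hgrowth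
  linarith [cumLoss_fstar_le_add_half he' hC hfhat (hab.trans hb)]

end EmpiricalRisk

theorem monotone_of_eq_two_pow {tau : ℕ → ℕ} (htau0 : tau 0 = 0)
    (htau : ∀ m, 1 ≤ m → tau m = 2 ^ m) : Monotone tau := by
  refine monotone_nat_of_le_succ fun m => ?_
  rw [htau (m + 1) (Nat.le_add_left 1 m)]
  rcases Nat.eq_zero_or_pos m with rfl | hm
  · simp [htau0]
  · rw [htau m hm]
    exact Nat.pow_le_pow_right two_pos m.le_succ

theorem stmt_9_general {X : Type*} (F : Set (X → ℝ)) (fstar : X → ℝ) (hstar : fstar ∈ F)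
    (M : ℕ)
    (x : ℕ → X) (y Q : ℕ → ℝ)
    (e : ℕ → (X → ℝ) → ℝ) (he : ∀ t f, 0 ≤ e t f)
    (C : ℝ) (hC : 0 < C)
    (hconc : ∀ f ∈ F, ∀ τ τ' : ℕ, 1 ≤ τ → τ ≤ τ' → τ' ≤ 2 ^ M →
      ((∑ t ∈ Finset.Icc τ τ',
          Q t * ((f (x t) - y t) ^ 2 - (fstar (x t) - y t) ^ 2))
        ≤ (3 / 2) * (∑ t ∈ Finset.Icc τ τ', e t f) + C)
      ∧ ((∑ t ∈ Finset.Icc τ τ', e t f)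
        ≤ 2 * (∑ t ∈ Finset.Icc τ τ',
            Q t * ((f (x t) - y t) ^ 2 - (fstar (x t) - y t) ^ 2)) + C))
    (tau : ℕ → ℕ) (htau0 : tau 0 = 0) (htau : ∀ m, 1 ≤ m → tau m = 2 ^ m)
    (Rhat : ℕ → (X → ℝ) → ℝ)
    (hRhat : ∀ m f,
      Rhat m f = ∑ t ∈ Finset.Icc 1 (tau (m - 1)), Q t * (f (x t) - y t) ^ 2)
    (fhat : ℕ → (X → ℝ)) (hfhatF : ∀ m, fhat m ∈ F)
    (hfhatmin : ∀ m, ∀ f ∈ F, Rhat m (fhat m) ≤ Rhat m f)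
    (beta : ℕ → ℝ) (hbeta : ∀ m, beta m = ((M - m + 1 : ℕ) : ℝ) * C)
    (Fm : ℕ → Set (X → ℝ))
    (hFm : ∀ m, Fm m = {f ∈ F | Rhat m f ≤ Rhat m (fhat m) + beta m}) :
    (∀ m, 1 ≤ m → m ≤ M → fstar ∈ Fm m)
    ∧ (∀ m, 1 ≤ m → m ≤ M → ∀ f ∈ Fm m,
        (∑ t ∈ Finset.Icc 1 (tau (m - 1)), e t f) ≤ 2 * beta m + C)
    ∧ (∀ m, 1 ≤ m → m ≤ M - 1 → Fm (m + 1) ⊆ Fm m) := by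
  set ℓ : ℕ → (X → ℝ) → ℝ := fun t f => Q t * (f (x t) - y t) ^ 2
  have hlow : ∀ f ∈ F, ExcessLossConcentration ℓ e fstar f (2 ^ M) C :=
    fun f hf τ τ' h1 h2 h3 => by simpa only [mul_sub] using (hconc f hf τ τ' h1 h2 h3).2
  have hRhat' : ∀ m f, Rhat m f = cumLoss ℓ (tau (m - 1)) f := hRhat
  have htau_mono := monotone_of_eq_two_pow htau0 htau
  have htau_le : ∀ m, 1 ≤ m → m ≤ M → tau (m - 1) ≤ 2 ^ M := fun m hm1 hmM =>
    (htau_mono ((m.sub_le 1).trans hmM)).trans (htau M (hm1.trans hmM)).le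
  have hC_le_beta : ∀ m, C ≤ beta m := fun m => by
    rw [hbeta]
    exact le_mul_of_one_le_left hC.le (by exact_mod_cast Nat.le_add_left 1 _)
  have hbeta_succ : ∀ m, m + 1 ≤ M → beta m = beta (m + 1) + C := fun m hm => by
    rw [hbeta, hbeta, show M - m = M - (m + 1) + 1 by omega]
    push_cast
    ring
  have hmin : ∀ m, Rhat m (fhat m) ≤ Rhat m fstar := fun m => hfhatmin m fstar hstar
  simp only [hFm, hRhat'] at hmin ⊢
  refine ⟨fun m hm1 hmM => ⟨hstar, ?_⟩, fun m hm1 hmM f ⟨hf, hfβ⟩ => ?_,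
    fun m hm1 hmM f ⟨hf, hfβ⟩ => ⟨hf, ?_⟩⟩
  · linarith [hC_le_beta m,
      cumLoss_fstar_le_add_half (he · _) hC.le (hlow _ (hfhatF m)) (htau_le m hm1 hmM)]
  · exact sum_Icc_one_le_two_mul_add hC.le (hlow f hf) (htau_le m hm1 hmM) (hmin m) hfβ
  · rw [hbeta_succ m (by omega)]
    exact cumLoss_le_of_cumLoss_le_of_le (he · f) (he · _) hC.le (hlow f hf) (hlow _ (hfhatF m))
      (htau_mono (m.sub_le 1)) (htau_le (m + 1) (by omega) (by omega)) (hmin (m + 1)) hfβ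

/-- Deterministic properties of the epoch-wise active sets of the main algorithm, on the
concentration event.  Epochs have endpoints `τ_0 = 0`, `τ_m = 2^m`, `T = 2^M`;
`M_t(f) = Q_t·((f(x_t) - y_t)² - (f⋆(x_t) - y_t)²)`; `e_t : F → [0, ∞)` are nonnegative
(standing for the conditional expectations `E[M_t(f) | 𝔉_{t-1}]`) and are assumed to
satisfy the two-sided concentration inequalities with constant `C`.
`R̂_m(f) = Σ_{t=1}^{τ_{m-1}} Q_t (f(x_t) - y_t)²`, `f̂_m` minimizes `R̂_m` over `F`,
`β_m = (M - m + 1)·C`, and `F_m = {f ∈ F | R̂_m(f) ≤ R̂_m(f̂_m) + β_m}`.  Then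
(1) `f⋆ ∈ F_m` for every `m ∈ [M]`;
(2) `Σ_{t=1}^{τ_{m-1}} e_t(f) ≤ 2β_m + C` for every `f ∈ F_m`, `m ∈ [M]`;
(3) `F_{m+1} ⊆ F_m` for every `m ∈ [M-1]`. -/
theorem stmt_9 {X : Type*} (F : Set (X → ℝ)) (fstar : X → ℝ) (hstar : fstar ∈ F)
    (hFb : ∀ f ∈ F, ∀ z, f z ∈ Set.Icc (0 : ℝ) 1)
    (M : ℕ) (hM : 1 ≤ M)
    (x : ℕ → X) (y Q : ℕ → ℝ) (hy : ∀ t, y t ∈ Set.Icc (0 : ℝ) 1)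
    (hQ : ∀ t, Q t = 0 ∨ Q t = 1)
    (e : ℕ → (X → ℝ) → ℝ) (he : ∀ t f, 0 ≤ e t f)
    (C : ℝ) (hC : 0 < C)
    (hconc : ∀ f ∈ F, ∀ τ τ' : ℕ, 1 ≤ τ → τ ≤ τ' → τ' ≤ 2 ^ M →
      ((∑ t ∈ Finset.Icc τ τ',
          Q t * ((f (x t) - y t) ^ 2 - (fstar (x t) - y t) ^ 2))
        ≤ (3 / 2) * (∑ t ∈ Finset.Icc τ τ', e t f) + C)
      ∧ ((∑ t ∈ Finset.Icc τ τ', e t f)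
        ≤ 2 * (∑ t ∈ Finset.Icc τ τ',
            Q t * ((f (x t) - y t) ^ 2 - (fstar (x t) - y t) ^ 2)) + C))
    (tau : ℕ → ℕ) (htau0 : tau 0 = 0) (htau : ∀ m, 1 ≤ m → tau m = 2 ^ m)
    (Rhat : ℕ → (X → ℝ) → ℝ)
    (hRhat : ∀ m f,
      Rhat m f = ∑ t ∈ Finset.Icc 1 (tau (m - 1)), Q t * (f (x t) - y t) ^ 2)
    (fhat : ℕ → (X → ℝ)) (hfhatF : ∀ m, fhat m ∈ F)
    (hfhatmin : ∀ m, ∀ f ∈ F, Rhat m (fhat m) ≤ Rhat m f)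
    (beta : ℕ → ℝ) (hbeta : ∀ m, beta m = ((M - m + 1 : ℕ) : ℝ) * C)
    (Fm : ℕ → Set (X → ℝ))
    (hFm : ∀ m, Fm m = {f ∈ F | Rhat m f ≤ Rhat m (fhat m) + beta m}) :
    (∀ m, 1 ≤ m → m ≤ M → fstar ∈ Fm m)
    ∧ (∀ m, 1 ≤ m → m ≤ M → ∀ f ∈ Fm m,
        (∑ t ∈ Finset.Icc 1 (tau (m - 1)), e t f) ≤ 2 * beta m + C)
    ∧ (∀ m, 1 ≤ m → m ≤ M - 1 → Fm (m + 1) ⊆ Fm m) :=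
  stmt_9_general F fstar hstar M x y Q e he C hC hconc tau htau0 htau Rhat hRhat fhat hfhatF
    hfhatmin beta hbeta Fm hFm
end

section
/- Let ν be a sub-probability measure on X (i.e., ν(X) ≤ 1), let F be a set of measurable functions X → [0,1] with f⋆ ∈ F, and let G ⊆ F with f⋆ ∈ G. Suppose ε > 0 satisfies ∫(f − f⋆)² dν ≤ ε² for every f ∈ G, and define the width w(x) := sup_{f,f′∈G} |f(x) − f′(x)|. Then for every γ > 0, ν({x : w(x) > γ}) ≤ (4ε²/γ²)·θ_{f⋆}(F, γ/2, ε/√2). -/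
open MeasureTheory ENNReal

/-- The value function disagreement coefficient
`θ_{f⋆}(F, γ₀, ε₀) = max 1 (sup_μ sup_{γ > γ₀, ε > ε₀} (γ²/ε²) ·
μ {x | ∃ f ∈ F, |f x - f⋆ x| > γ ∧ ∫ (f - f⋆)² dμ ≤ ε²})`, the outer supremum ranging
over all probability measures `μ` on `X`. -/
noncomputable def valDisCoef {X : Type*} [MeasurableSpace X]
    (F : Set (X → ℝ)) (fstar : X → ℝ) (γ₀ ε₀ : ℝ) : ℝ≥0∞ :=
  max 1 (⨆ μ : Measure X, ⨆ _ : IsProbabilityMeasure μ,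
    ⨆ γ : ℝ, ⨆ _ : γ₀ < γ, ⨆ ε : ℝ, ⨆ _ : ε₀ < ε,
      ENNReal.ofReal (γ ^ 2 / ε ^ 2) *
        μ {x | ∃ f ∈ F, γ < |f x - fstar x| ∧ ∫ y, (f y - fstar y) ^ 2 ∂μ ≤ ε ^ 2})

/-- The width of the set `G` of functions at a point `x`:
`w(x) = sup_{f, f' ∈ G} |f x - f' x|`. -/
noncomputable def width {X : Type*} (G : Set (X → ℝ)) (x : X) : ℝ :=
  sSup {r : ℝ | ∃ f ∈ G, ∃ f' ∈ G, r = |f x - f' x|}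

/-- Measure-theoretic core of the query-probability bound: if `ν` is a sub-probability
measure, `f⋆ ∈ G ⊆ F`, and `∫ (f - f⋆)² dν ≤ ε²` for every `f ∈ G`, then for every
`γ > 0` we have `ν {x | w(x) > γ} ≤ (4ε²/γ²)·θ_{f⋆}(F, γ/2, ε/√2)`, where
`w(x) = sup_{f, f' ∈ G} |f x - f' x|`. -/
theorem stmt_10 {X : Type*} [MeasurableSpace X]
    (ν : Measure X) (hν : ν Set.univ ≤ 1)
    (F G : Set (X → ℝ)) (hFm : ∀ f ∈ F, Measurable f)
    (hFb : ∀ f ∈ F, ∀ x, f x ∈ Set.Icc (0 : ℝ) 1) (hFcnt : F.Countable)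
    (fstar : X → ℝ) (hstarF : fstar ∈ F) (hGF : G ⊆ F) (hstarG : fstar ∈ G)
    (ε : ℝ) (hε : 0 < ε)
    (hint : ∀ f ∈ G, ∫ x, (f x - fstar x) ^ 2 ∂ν ≤ ε ^ 2)
    (γ : ℝ) (hγ : 0 < γ) :
    ν {x | γ < width G x}
      ≤ ENNReal.ofReal (4 * ε ^ 2 / γ ^ 2) *
          valDisCoef F fstar (γ / 2) (ε / Real.sqrt 2) := by
  -- Step 0: dispose of the trivial case ν = 0
  set c : ℝ≥0∞ := ν Set.univ with hc_def
  by_cases hc0 : c = 0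
  · have : ν {x | γ < width G x} = 0 := by
      have := measure_mono (μ := ν) (Set.subset_univ {x | γ < width G x})
      simpa [hc0.symm ▸ hc0, ← hc_def, hc0] using this.trans_eq hc0
    simp [this]
  have hctop : c ≠ ⊤ := (hν.trans_lt (by norm_num)).ne
  set ct : ℝ := c.toReal with hct_def
  have hct_pos : 0 < ct := ENNReal.toReal_pos hc0 hctop
  have hct_le_one : ct ≤ 1 := by
    have := ENNReal.toReal_mono (by norm_num) hν
    simpa using this
  -- the normalized probability measure
  set μ : Measure X := c⁻¹ • ν with hμ_def
  have hprob : IsProbabilityMeasure μ := by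
    constructor
    rw [hμ_def, Measure.smul_apply, smul_eq_mul, ← hc_def, ENNReal.inv_mul_cancel hc0 hctop]
  -- the adjusted ε
  set ε' : ℝ := ε / Real.sqrt ct with hε'_def
  have hsqrt_pos : 0 < Real.sqrt ct := Real.sqrt_pos.mpr hct_pos
  have hε'_pos : 0 < ε' := div_pos hε hsqrt_pos
  have hε'_sq : ε' ^ 2 = ε ^ 2 / ct := by
    rw [hε'_def, div_pow, Real.sq_sqrt hct_pos.le]
  have hε'_gt : ε / Real.sqrt 2 < ε' := by
    have h1 : Real.sqrt ct ≤ 1 := by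
      rw [show (1:ℝ) = Real.sqrt 1 by simp]
      exact Real.sqrt_le_sqrt hct_le_one
    have h2 : (1:ℝ) < Real.sqrt 2 := by
      rw [show (1:ℝ) = Real.sqrt 1 by simp]
      exact Real.sqrt_lt_sqrt (by norm_num) (by norm_num)
    calc ε / Real.sqrt 2 < ε / 1 := by
          apply div_lt_div_of_pos_left hε (by norm_num) h2
      _ = ε := by ring
      _ ≤ ε / Real.sqrt ct := by
          rw [le_div_iff₀ hsqrt_pos]
          nlinarith
  -- integral bound w.r.t. μ
  have hintμ : ∀ f ∈ G, ∫ x, (f x - fstar x) ^ 2 ∂μ ≤ ε' ^ 2 := by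
    intro f hf
    rw [hμ_def, integral_smul_measure, hε'_sq, smul_eq_mul, ENNReal.toReal_inv, ← hct_def,
      div_eq_inv_mul]
    exact mul_le_mul_of_nonneg_left (hint f hf) (inv_nonneg.mpr hct_pos.le)
  -- family of disagreement sets
  set g : ℕ → ℝ := fun n => γ / 2 + ((n : ℝ) + 1)⁻¹ with hg_def
  have hg_gt : ∀ n, γ / 2 < g n := fun n => by
    have : (0:ℝ) < ((n : ℝ) + 1)⁻¹ := by positivity
    simp only [hg_def]; linarith
  set D : ℕ → Set X := fun n => {x | ∃ f ∈ G, g n < |f x - fstar x|} with hD_def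
  have hDmono : Monotone D := by
    intro m n hmn x hx
    obtain ⟨f, hf, hfx⟩ := hx
    refine ⟨f, hf, lt_of_le_of_lt ?_ hfx⟩
    simp only [hg_def]
    have : ((n:ℝ)+1)⁻¹ ≤ ((m:ℝ)+1)⁻¹ := by
      apply inv_anti₀ (by positivity)
      have := (Nat.cast_le (α := ℝ)).mpr hmn
      linarith
    linarith
  -- the width superlevel set is inside the union of the D n
  have hsub : {x | γ < width G x} ⊆ ⋃ n, D n := by
    intro x hx
    have hne : {r : ℝ | ∃ f ∈ G, ∃ f' ∈ G, r = |f x - f' x|}.Nonempty :=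
      ⟨|fstar x - fstar x|, fstar, hstarG, fstar, hstarG, rfl⟩
    obtain ⟨r, ⟨f, hf, f', hf', hr⟩, hrγ⟩ := exists_lt_of_lt_csSup hne hx
    subst hr
    -- one of f, f' deviates from fstar by more than γ/2
    have htri : |f x - f' x| ≤ |f x - fstar x| + |f' x - fstar x| := by
      have := abs_sub_le (f x) (fstar x) (f' x)
      calc |f x - f' x| ≤ |f x - fstar x| + |fstar x - f' x| := this
        _ = |f x - fstar x| + |f' x - fstar x| := by rw [abs_sub_comm (fstar x)]
    have hbig : ∃ h ∈ G, γ / 2 < |h x - fstar x| := by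
      by_contra hcon
      push_neg at hcon
      have h1 := hcon f hf
      have h2 := hcon f' hf'
      linarith
    obtain ⟨h, hh, hhx⟩ := hbig
    obtain ⟨n, hn⟩ := exists_nat_one_div_lt (show (0:ℝ) < |h x - fstar x| - γ / 2 by linarith)
    refine Set.mem_iUnion.mpr ⟨n, h, hh, ?_⟩
    simp only [hg_def]
    rw [one_div] at hn
    linarith
  -- bound ν (D n) for each n
  have hkey : ∀ n, ν (D n) ≤ ENNReal.ofReal (4 * ε ^ 2 / γ ^ 2) *
      valDisCoef F fstar (γ / 2) (ε / Real.sqrt 2) := by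
    intro n
    set S : Set X := {x | ∃ f ∈ F, g n < |f x - fstar x| ∧
        ∫ y, (f y - fstar y) ^ 2 ∂μ ≤ ε' ^ 2} with hS_def
    have hDS : D n ⊆ S := by
      rintro x ⟨f, hf, hfx⟩
      exact ⟨f, hGF hf, hfx, hintμ f hf⟩
    have hθ : ENNReal.ofReal (g n ^ 2 / ε' ^ 2) * μ S ≤
        valDisCoef F fstar (γ / 2) (ε / Real.sqrt 2) := by
      refine le_trans ?_ (le_max_right _ _)
      refine le_iSup_of_le μ ?_
      refine le_iSup_of_le hprob ?_
      refine le_iSup_of_le (g n) ?_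
      refine le_iSup_of_le (hg_gt n) ?_
      refine le_iSup_of_le ε' ?_
      exact le_iSup_of_le hε'_gt le_rfl
    have hνμ : ν (D n) = c * μ (D n) := by
      rw [hμ_def, Measure.smul_apply, smul_eq_mul, ← mul_assoc,
        ENNReal.mul_inv_cancel hc0 hctop, one_mul]
    have hcoef : c ≤ ENNReal.ofReal (4 * ε ^ 2 / γ ^ 2) * ENNReal.ofReal (g n ^ 2 / ε' ^ 2) := by
      rw [← ENNReal.ofReal_mul (by positivity)]
      have hcct : c = ENNReal.ofReal ct := (ENNReal.ofReal_toReal hctop).symm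
      rw [hcct]
      apply ENNReal.ofReal_le_ofReal
      have hgn : γ / 2 < g n := hg_gt n
      rw [hε'_sq]
      have hre : 4 * ε ^ 2 / γ ^ 2 * (g n ^ 2 / (ε ^ 2 / ct)) = 4 * g n ^ 2 * ct / γ ^ 2 := by
        field_simp
      rw [hre, le_div_iff₀ (by positivity : (0:ℝ) < γ ^ 2)]
      have h1 : 0 ≤ ct * ((2 * g n - γ) * (2 * g n + γ)) :=
        mul_nonneg hct_pos.le (mul_nonneg
          (by have : (0:ℝ) < ((n:ℝ)+1)⁻¹ := by positivity
              simp only [hg_def]; linarith)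
          (by have : (0:ℝ) < ((n:ℝ)+1)⁻¹ := by positivity
              simp only [hg_def]; linarith))
      nlinarith [h1]
    calc ν (D n) = c * μ (D n) := hνμ
      _ ≤ c * μ S := mul_le_mul_right (measure_mono hDS) c
      _ ≤ (ENNReal.ofReal (4 * ε ^ 2 / γ ^ 2) * ENNReal.ofReal (g n ^ 2 / ε' ^ 2)) * μ S :=
          mul_le_mul_left hcoef _
      _ = ENNReal.ofReal (4 * ε ^ 2 / γ ^ 2) * (ENNReal.ofReal (g n ^ 2 / ε' ^ 2) * μ S) := by
          rw [mul_assoc]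
      _ ≤ ENNReal.ofReal (4 * ε ^ 2 / γ ^ 2) * valDisCoef F fstar (γ / 2) (ε / Real.sqrt 2) :=
          mul_le_mul_right hθ _
  calc ν {x | γ < width G x} ≤ ν (⋃ n, D n) := measure_mono hsub
    _ = ⨆ n, ν (D n) := hDmono.measure_iUnion
    _ ≤ ENNReal.ofReal (4 * ε ^ 2 / γ ^ 2) * valDisCoef F fstar (γ / 2) (ε / Real.sqrt 2) :=
        iSup_le hkey
end

section
/- Let ν be a sub-probability measure on X (i.e., ν(X) ≤ 1), let F be a set of measurable functions X → [0,1] with f⋆ ∈ F, and let G ⊆ F with f⋆ ∈ G. Suppose ε > 0 satisfies ∫(f − f⋆)² dν ≤ ε² for every f ∈ G, and define the width w(x) := sup_{f,f′∈G} |f(x) − f′(x)|. Then for every γ > 0, ∫ 1(w(x) > γ)·w(x) dν(x) ≤ (8ε²/γ)·θ_{f⋆}(F, γ/2, ε/√2). -/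
open MeasureTheory ENNReal

/-!
Where the width exceeds `t`, some `f ∈ G` is `t/2`-far from `f⋆` (triangle inequality through
`f⋆`). After normalising `ν` to a probability measure, which only enlarges the `L²` radius, the
disagreement coefficient bounds the measure of that set by `(4ε²/t²)·θ` for every `t ≥ γ`. The
layer-cake formula then gives
`∫ 1(w > γ)·w dν = γ·ν(w > γ) + ∫_γ^∞ ν(w > t) dt ≤ (4ε²/γ + 4ε²/γ)·θ`.
-/

open Set

lemma lintegral_Ioi_inv_sq {c : ℝ} (hc : 0 < c) :
    ∫⁻ t in Ioi c, ENNReal.ofReal (1 / t ^ 2) = ENNReal.ofReal (1 / c) := by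
  have hpow : EqOn (fun t : ℝ ↦ 1 / t ^ 2) (fun t ↦ t ^ (-2 : ℝ)) (Ioi c) := fun t ht ↦ by
    simp [Real.rpow_neg (hc.trans ht).le]
  rw [setLIntegral_congr_fun measurableSet_Ioi fun t ht ↦ congrArg ENNReal.ofReal (hpow ht),
    ← ofReal_integral_eq_lintegral_ofReal (integrableOn_Ioi_rpow_of_lt (by norm_num) hc)
      (ae_restrict_of_forall_mem measurableSet_Ioi fun t ht ↦
        (Real.rpow_pos_of_pos (hc.trans ht) _).le),
    integral_Ioi_rpow_of_lt (by norm_num) hc]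
  norm_num [Real.rpow_neg_one]

lemma lintegral_Ioi_zero_inv_sq_max {γ : ℝ} (hγ : 0 < γ) :
    ∫⁻ t in Ioi 0, ENNReal.ofReal (1 / max t γ ^ 2) = ENNReal.ofReal (2 / γ) := by
  have hmid : ∫⁻ t in Ioc 0 γ, ENNReal.ofReal (1 / max t γ ^ 2) = ENNReal.ofReal (1 / γ) := by
    rw [setLIntegral_congr_fun measurableSet_Ioc fun t ht ↦ by rw [max_eq_right ht.2],
      setLIntegral_const, Real.volume_Ioc, sub_zero, ← ENNReal.ofReal_mul (by positivity)]
    congr 1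
    field_simp
  have htail : ∫⁻ t in Ioi γ, ENNReal.ofReal (1 / max t γ ^ 2) = ENNReal.ofReal (1 / γ) := by
    rw [setLIntegral_congr_fun measurableSet_Ioi fun t ht ↦ by rw [max_eq_left (le_of_lt ht)],
      lintegral_Ioi_inv_sq hγ]
  rw [← Ioc_union_Ioi_eq_Ioi hγ.le, lintegral_union measurableSet_Ioi Ioc_disjoint_Ioi_same,
    hmid, htail, ← ENNReal.ofReal_add (by positivity) (by positivity)]
  ring_nf

lemma lintegral_ofReal_ite_lt_le_of_tail {X : Type*} [MeasurableSpace X] {μ : Measure X}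
    {w : X → ℝ} (hw : Measurable w) {γ C : ℝ} (hγ : 0 < γ) (hC : 0 ≤ C) {K : ℝ≥0∞}
    (htail : ∀ t, γ ≤ t → μ {x | t < w x} ≤ ENNReal.ofReal (C / t ^ 2) * K) :
    ∫⁻ x, ENNReal.ofReal (if γ < w x then w x else 0) ∂μ ≤ ENNReal.ofReal (2 * C / γ) * K := by
  set g : X → ℝ := fun x ↦ if γ < w x then w x else 0
  have hg_nonneg (x : X) : 0 ≤ g x := by
    simp only [g]
    split_ifs with h <;> linarith
  have hlevel (t : ℝ) (ht : 0 ≤ t) : {x | t < g x} = {x | max t γ < w x} := by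
    ext x
    by_cases h : γ < w x <;> simp [g, h]
    linarith
  have hg : Measurable g :=
    Measurable.ite (measurableSet_lt measurable_const hw) hw measurable_const
  calc ∫⁻ x, ENNReal.ofReal (g x) ∂μ = ∫⁻ t in Ioi 0, μ {x | t < g x} :=
        lintegral_eq_lintegral_meas_lt μ (ae_of_all _ hg_nonneg) hg.aemeasurable
    _ ≤ ∫⁻ t in Ioi 0, ENNReal.ofReal C * ENNReal.ofReal (1 / max t γ ^ 2) * K := by
        refine setLIntegral_mono' measurableSet_Ioi fun t ht ↦ ?_
        rw [hlevel t (le_of_lt ht), ← ENNReal.ofReal_mul hC, ← mul_div_assoc, mul_one]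
        exact htail _ (le_max_right _ _)
    _ = ENNReal.ofReal (2 * C / γ) * K := by
        rw [lintegral_mul_const _ (by fun_prop), lintegral_const_mul' _ _ ENNReal.ofReal_ne_top,
          lintegral_Ioi_zero_inv_sq_max hγ, ← ENNReal.ofReal_mul hC, mul_div_assoc,
          mul_div_left_comm]

section Disagreement

variable {X : Type*} [MeasurableSpace X] {F G : Set (X → ℝ)} {fstar : X → ℝ} {γ₀ ε₀ γ ε : ℝ}

lemma le_valDisCoef (μ : Measure X) [IsProbabilityMeasure μ] (hγ : γ₀ < γ) (hε : ε₀ < ε) :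
    ENNReal.ofReal (γ ^ 2 / ε ^ 2) *
        μ {x | ∃ f ∈ F, γ < |f x - fstar x| ∧ ∫ y, (f y - fstar y) ^ 2 ∂μ ≤ ε ^ 2}
      ≤ valDisCoef F fstar γ₀ ε₀ :=
  le_max_of_le_right <| le_iSup_of_le μ <| le_iSup_of_le ‹_› <| le_iSup_of_le γ <|
    le_iSup_of_le hγ <| le_iSup_of_le ε <| le_iSup_of_le hε le_rfl

lemma measure_disagreement_le_valDisCoef (μ : Measure X) [IsProbabilityMeasure μ]
    (hγ₀ : γ₀ < γ) (hε₀ : ε₀ < ε) (hγ : 0 < γ) (hε : 0 < ε) :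
    μ {x | ∃ f ∈ F, γ < |f x - fstar x| ∧ ∫ y, (f y - fstar y) ^ 2 ∂μ ≤ ε ^ 2}
      ≤ ENNReal.ofReal (ε ^ 2 / γ ^ 2) * valDisCoef F fstar γ₀ ε₀ := by
  calc _ = ENNReal.ofReal (ε ^ 2 / γ ^ 2) * (ENNReal.ofReal (γ ^ 2 / ε ^ 2) *
        μ {x | ∃ f ∈ F, γ < |f x - fstar x| ∧ ∫ y, (f y - fstar y) ^ 2 ∂μ ≤ ε ^ 2}) := by
        rw [← mul_assoc, ← ENNReal.ofReal_mul (by positivity),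
          show ε ^ 2 / γ ^ 2 * (γ ^ 2 / ε ^ 2) = 1 by field_simp, ENNReal.ofReal_one, one_mul]
    _ ≤ _ := by gcongr; exact le_valDisCoef μ hγ₀ hε₀

lemma measure_disagreement_le_valDisCoef_of_measure_univ_le_one (ν : Measure X)
    (hν : ν univ ≤ 1) (hγ₀ : γ₀ < γ) (hε₀ : ε₀ < ε) (hγ : 0 < γ) (hε : 0 < ε) :
    ν {x | ∃ f ∈ F, γ < |f x - fstar x| ∧ ∫ y, (f y - fstar y) ^ 2 ∂ν ≤ ε ^ 2}
      ≤ ENNReal.ofReal (ε ^ 2 / γ ^ 2) * valDisCoef F fstar γ₀ ε₀ := by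
  rcases eq_or_ne ν 0 with rfl | hν0
  · simp
  have : NeZero ν := ⟨hν0⟩
  have : IsFiniteMeasure ν := ⟨hν.trans_lt one_lt_top⟩
  set c := ν univ
  have hc0 : c ≠ 0 := NeZero.ne c
  have hc : c ≠ ∞ := measure_ne_top ν univ
  set r := c.toReal
  have hr0 : 0 < r := ENNReal.toReal_pos hc0 hc
  have hr1 : r ≤ 1 := ENNReal.toReal_le_of_le_ofReal zero_le_one (by simpa using hν)
  -- Normalising `ν` to a probability measure rescales the `L²` radius to `ε / √r ≥ ε`.
  set μ : Measure X := c⁻¹ • ν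
  set ε' := ε / √r
  have hε'sq : ε' ^ 2 = ε ^ 2 / r := by rw [div_pow, Real.sq_sqrt hr0.le]
  have hεε' : ε ≤ ε' := le_div_self hε.le (Real.sqrt_pos.2 hr0) (Real.sqrt_le_one.2 hr1)
  have hsub : {x | ∃ f ∈ F, γ < |f x - fstar x| ∧ ∫ y, (f y - fstar y) ^ 2 ∂ν ≤ ε ^ 2}
      ⊆ {x | ∃ f ∈ F, γ < |f x - fstar x| ∧ ∫ y, (f y - fstar y) ^ 2 ∂μ ≤ ε' ^ 2} := by
    rintro x ⟨f, hf, hlt, hint⟩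
    refine ⟨f, hf, hlt, ?_⟩
    rw [integral_smul_measure, ENNReal.toReal_inv, smul_eq_mul, hε'sq, inv_mul_eq_div]
    exact div_le_div_of_nonneg_right hint hr0.le
  have hνμ (s : Set X) : ν s = c * μ s := by
    rw [Measure.smul_apply, smul_eq_mul, ← mul_assoc, ENNReal.mul_inv_cancel hc0 hc, one_mul]
  calc _ ≤ c * μ {x | ∃ f ∈ F, γ < |f x - fstar x| ∧ ∫ y, (f y - fstar y) ^ 2 ∂μ ≤ ε' ^ 2} :=
        (measure_mono hsub).trans_eq (hνμ _)
    _ ≤ ENNReal.ofReal r * (ENNReal.ofReal (ε' ^ 2 / γ ^ 2) * valDisCoef F fstar γ₀ ε₀) := by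
        rw [ENNReal.ofReal_toReal hc]
        gcongr
        exact measure_disagreement_le_valDisCoef μ hγ₀ (hε₀.trans_le hεε') hγ (hε.trans_le hεε')
    _ = ENNReal.ofReal (ε ^ 2 / γ ^ 2) * valDisCoef F fstar γ₀ ε₀ := by
        rw [← mul_assoc, ← ENNReal.ofReal_mul hr0.le, hε'sq]
        congr 2
        field_simp

lemma measure_exists_lt_abs_sub_le_valDisCoef (ν : Measure X) (hν : ν univ ≤ 1) (hGF : G ⊆ F)
    (hint : ∀ f ∈ G, ∫ x, (f x - fstar x) ^ 2 ∂ν ≤ ε ^ 2)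
    (hγ₀ : γ₀ ≤ γ) (hε₀ : ε₀ < ε) (hγ : 0 < γ) (hε : 0 < ε) :
    ν {x | ∃ f ∈ G, γ < |f x - fstar x|}
      ≤ ENNReal.ofReal (ε ^ 2 / γ ^ 2) * valDisCoef F fstar γ₀ ε₀ := by
  -- `valDisCoef` only sees thresholds above `γ₀`, so approach `γ` from above.
  set T : ℕ → Set X := fun n ↦ {x | ∃ f ∈ G, γ + 1 / (n + 1) < |f x - fstar x|}
  have hmono : Monotone T := by
    rintro m n hmn x ⟨f, hf, hlt⟩
    exact ⟨f, hf, lt_of_le_of_lt (by gcongr) hlt⟩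
  have hcover : {x | ∃ f ∈ G, γ < |f x - fstar x|} ⊆ ⋃ n, T n := by
    rintro x ⟨f, hf, hlt⟩
    obtain ⟨n, hn⟩ := exists_nat_one_div_lt (sub_pos.2 hlt)
    exact mem_iUnion.2 ⟨n, f, hf, by linarith⟩
  refine (measure_mono hcover).trans ?_
  rw [hmono.measure_iUnion]
  refine iSup_le fun n ↦ ?_
  have hγn : γ < γ + 1 / (n + 1) := lt_add_of_pos_right γ (by positivity)
  calc ν (T n)
      ≤ ν {x | ∃ f ∈ F, γ + 1 / (n + 1) < |f x - fstar x| ∧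
          ∫ y, (f y - fstar y) ^ 2 ∂ν ≤ ε ^ 2} := by
        refine measure_mono ?_
        rintro x ⟨f, hf, hlt⟩
        exact ⟨f, hGF hf, hlt, hint f hf⟩
    _ ≤ ENNReal.ofReal (ε ^ 2 / (γ + 1 / (n + 1)) ^ 2) * valDisCoef F fstar γ₀ ε₀ :=
        measure_disagreement_le_valDisCoef_of_measure_univ_le_one ν hν (hγ₀.trans_lt hγn) hε₀
          (hγ.trans hγn) hε
    _ ≤ ENNReal.ofReal (ε ^ 2 / γ ^ 2) * valDisCoef F fstar γ₀ ε₀ := by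
        gcongr

end Disagreement

lemma width_eq_iSup {X : Type*} (G : Set (X → ℝ)) (x : X) :
    width G x = ⨆ p : G × G, |(p.1 : X → ℝ) x - (p.2 : X → ℝ) x| := by
  rw [width, iSup]
  congr 1
  ext r
  constructor
  · rintro ⟨f, hf, f', hf', rfl⟩
    exact ⟨(⟨f, hf⟩, ⟨f', hf'⟩), rfl⟩
  · rintro ⟨⟨f, f'⟩, rfl⟩
    exact ⟨f, f.2, f', f'.2, rfl⟩

lemma measurable_width {X : Type*} [MeasurableSpace X] {G : Set (X → ℝ)} (hG : G.Countable)
    (hGm : ∀ f ∈ G, Measurable f) : Measurable (width G) := by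
  have : Countable G := hG.to_subtype
  simp_rw [funext (width_eq_iSup G)]
  exact Measurable.iSup fun p ↦ ((hGm _ p.1.2).sub (hGm _ p.2.2)).abs

lemma exists_lt_abs_sub_of_lt_width {X : Type*} {G : Set (X → ℝ)} {x : X} {t : ℝ} (ht : 0 ≤ t)
    (hw : t < width G x) (g : X → ℝ) : ∃ f ∈ G, t / 2 < |f x - g x| := by
  have hne : {r : ℝ | ∃ f ∈ G, ∃ f' ∈ G, r = |f x - f' x|}.Nonempty := by
    by_contra h
    rw [not_nonempty_iff_eq_empty] at h
    rw [width, h, Real.sSup_empty] at hw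
    linarith
  obtain ⟨_, ⟨f, hf, f', hf', rfl⟩, hlt⟩ := exists_lt_of_lt_csSup hne hw
  by_contra! h
  linarith [abs_sub_le (f x) (g x) (f' x), abs_sub_comm (f' x) (g x), h f hf, h f' hf']

theorem stmt_11_general {X : Type*} [MeasurableSpace X]
    (ν : Measure X) (hν : ν Set.univ ≤ 1)
    (F G : Set (X → ℝ)) (hFm : ∀ f ∈ F, Measurable f)
    (hFcnt : F.Countable)
    (fstar : X → ℝ) (hGF : G ⊆ F)
    (ε : ℝ) (hε : 0 < ε)
    (hint : ∀ f ∈ G, ∫ x, (f x - fstar x) ^ 2 ∂ν ≤ ε ^ 2)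
    (γ : ℝ) (hγ : 0 < γ) :
    (∫⁻ x, ENNReal.ofReal (if γ < width G x then width G x else 0) ∂ν)
      ≤ ENNReal.ofReal (8 * ε ^ 2 / γ) *
          valDisCoef F fstar (γ / 2) (ε / Real.sqrt 2) := by
  have hw : Measurable (width G) :=
    measurable_width (hFcnt.mono hGF) fun f hf ↦ hFm f (hGF hf)
  have htail (t : ℝ) (ht : γ ≤ t) : ν {x | t < width G x}
      ≤ ENNReal.ofReal (4 * ε ^ 2 / t ^ 2) * valDisCoef F fstar (γ / 2) (ε / √2) := by
    have ht0 : 0 < t := hγ.trans_le ht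
    calc ν {x | t < width G x} ≤ ν {x | ∃ f ∈ G, t / 2 < |f x - fstar x|} :=
          measure_mono fun x hx ↦ exists_lt_abs_sub_of_lt_width ht0.le hx fstar
      _ ≤ ENNReal.ofReal (ε ^ 2 / (t / 2) ^ 2) * valDisCoef F fstar (γ / 2) (ε / √2) :=
          measure_exists_lt_abs_sub_le_valDisCoef ν hν hGF hint (by linarith)
            (div_lt_self hε Real.one_lt_sqrt_two) (by positivity) hε
      _ = ENNReal.ofReal (4 * ε ^ 2 / t ^ 2) * valDisCoef F fstar (γ / 2) (ε / √2) := by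
          congr 2
          field_simp
          ring
  convert lintegral_ofReal_ite_lt_le_of_tail hw hγ (by positivity) htail using 3
  ring

/-- Measure-theoretic core of the per-epoch excess-error bound: if `ν` is a
sub-probability measure, `f⋆ ∈ G ⊆ F`, and `∫ (f - f⋆)² dν ≤ ε²` for every `f ∈ G`, then
for every `γ > 0`,
`∫ 1(w(x) > γ)·w(x) dν(x) ≤ (8ε²/γ)·θ_{f⋆}(F, γ/2, ε/√2)`, where
`w(x) = sup_{f, f' ∈ G} |f x - f' x|`. -/
theorem stmt_11 {X : Type*} [MeasurableSpace X]
    (ν : Measure X) (hν : ν Set.univ ≤ 1)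
    (F G : Set (X → ℝ)) (hFm : ∀ f ∈ F, Measurable f)
    (hFb : ∀ f ∈ F, ∀ x, f x ∈ Set.Icc (0 : ℝ) 1) (hFcnt : F.Countable)
    (fstar : X → ℝ) (hstarF : fstar ∈ F) (hGF : G ⊆ F) (hstarG : fstar ∈ G)
    (ε : ℝ) (hε : 0 < ε)
    (hint : ∀ f ∈ G, ∫ x, (f x - fstar x) ^ 2 ∂ν ≤ ε ^ 2)
    (γ : ℝ) (hγ : 0 < γ) :
    (∫⁻ x, ENNReal.ofReal (if γ < width G x then width G x else 0) ∂ν)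
      ≤ ENNReal.ofReal (8 * ε ^ 2 / γ) *
          valDisCoef F fstar (γ / 2) (ε / Real.sqrt 2) :=
  stmt_11_general ν hν F G hFm hFcnt fstar hGF ε hε hint γ hγ
end

section
/- Fix δ ∈ (0,1). With probability at least 1 − δ, simultaneously for every f ∈ F and every τ ∈ ℕ: Σ_{t=1}^{τ} M_t(f) ≤ (3/2)·Σ_{t=1}^{τ} Q_t·(f(x_t) − f⋆(x_t))² + log(2|F|/δ), and Σ_{t=1}^{τ} Q_t·(f(x_t) − f⋆(x_t))² ≤ 2·Σ_{t=1}^{τ} M_t(f) + 2·log(2|F|/δ). -/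
/-!
For a predictable weight `U_t` and noise `e_t` that is conditionally centred and confined to an
interval of length one, Hoeffding's lemma gives `E[exp(U_t e_t) | 𝔉̄_{t-1}] ≤ exp(U_t² / 8)`, so
`W_n = exp (∑_{t ≤ n} (U_t e_t - U_t² / 8))` is a nonnegative supermartingale with `W_0 = 1`.
Optional stopping at the first time `W` exceeds `e^r` (Ville's inequality) bounds the probability
that this ever happens by `e^{-r}`, uniformly in time. Taking `U_t = ±2 Q_t (f - f⋆)(x_t)` and
`e_t = f⋆(x_t) - y_t`, the exponent is `∑ M_t(f) - (3/2) ∑ Q_t (f - f⋆)²(x_t)` for the sign `+` and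
`(1/2) ∑ Q_t (f - f⋆)²(x_t) - ∑ M_t(f)` for the sign `-`; a union bound over `F` and the two signs
with `r = log (2|F|/δ)` concludes.
-/

open MeasureTheory ProbabilityTheory Real

lemma two_point_mgf_le {p : ℝ} (hp : p ∈ Set.Icc (0 : ℝ) 1) (u : ℝ) :
    p * exp (u * (1 - p)) + (1 - p) * exp (u * -p) ≤ exp (u ^ 2 / 8) := by
  let q : unitInterval := ⟨p, hp⟩
  have hsupp : ∀ᵐ z ∂Ber(1 - p, -p, q), z ∈ Set.Icc (-p) (1 - p) := by
    rw [ae_iff]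
    exact bernoulliMeasure_apply_of_notMem_of_notMem q measurableSet_Icc.compl (by simp) (by simp)
  have hmean : ∫ z, id z ∂Ber(1 - p, -p, q) = 0 := by
    simp only [integral_bernoulliMeasure, q, id, smul_eq_mul]; ring
  have := (hasSubgaussianMGF_of_mem_Icc_of_integral_eq_zero aemeasurable_id hsupp hmean).mgf_le u
  simp only [mgf, integral_bernoulliMeasure, id, smul_eq_mul, q] at this
  convert this using 2
  norm_num [sub_neg_eq_add]
  ring

lemma exp_mul_le_chord {P z : ℝ} (hz : z ∈ Set.Icc (P - 1) P) (u : ℝ) :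
    exp (u * z) ≤ (exp (u * P) - exp (u * (P - 1))) * z
      + (exp (u * (P - 1)) * P + exp (u * P) * (1 - P)) := by
  have h := convexOn_exp.2 (Set.mem_univ (u * (P - 1))) (Set.mem_univ (u * P))
    (sub_nonneg.2 hz.2) (sub_nonneg.2 hz.1) (by ring)
  simp only [smul_eq_mul] at h
  rw [show (P - z) * (u * (P - 1)) + (z - (P - 1)) * (u * P) = u * z by ring] at h
  exact h.trans_eq (by ring)

lemma abs_le_one_of_mem_Icc_sub_one {P z : ℝ} (hP : P ∈ Set.Icc (0 : ℝ) 1)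
    (hz : z ∈ Set.Icc (P - 1) P) : |z| ≤ 1 :=
  abs_le.2 ⟨by linarith [hP.1, hz.1], by linarith [hP.2, hz.2]⟩

lemma mul_le_of_abs_le_of_abs_le_one {u a K : ℝ} (hu : |u| ≤ K) (ha : |a| ≤ 1) : u * a ≤ K := by
  have := abs_mul u a
  nlinarith [le_abs_self (u * a), abs_nonneg u, abs_nonneg a]

section Hoeffding

variable {Ω : Type*} {m0 : MeasurableSpace Ω} {μ : Measure Ω} [IsProbabilityMeasure μ] {K : ℝ}

lemma integrable_exp_mul_of_abs_le {U a : Ω → ℝ} (hU : Measurable U) (ha : Measurable a)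
    (hUb : ∀ ω, |U ω| ≤ K) (hab : ∀ ω, |a ω| ≤ 1) : Integrable (fun ω => exp (U ω * a ω)) μ :=
  Integrable.of_mem_Icc 0 (exp K) (by fun_prop)
    (ae_of_all _ fun ω =>
      ⟨(exp_pos _).le, exp_le_exp.2 (mul_le_of_abs_le_of_abs_le_one (hUb ω) (hab ω))⟩)

lemma condExp_exp_mul_le {m : MeasurableSpace Ω} (hm : m ≤ m0) {U P e : Ω → ℝ}
    (hU : StronglyMeasurable[m] U) (hUb : ∀ ω, |U ω| ≤ K)
    (hP : StronglyMeasurable[m] P) (hPb : ∀ ω, P ω ∈ Set.Icc (0 : ℝ) 1)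
    (he : Measurable[m0] e) (heb : ∀ ω, e ω ∈ Set.Icc (P ω - 1) (P ω))
    (he0 : μ[e | m] =ᵐ[μ] 0) :
    μ[fun ω => exp (U ω * e ω) | m] ≤ᵐ[μ] fun ω => exp (U ω ^ 2 / 8) := by
  -- `exp (U e)` lies below the chord of `exp` over `[U (P - 1), U P]`; conditioning kills the
  -- term `C e` of the chord and leaves `G`, the mgf of a centred two-point law.
  set C : Ω → ℝ := fun ω => exp (U ω * P ω) - exp (U ω * (P ω - 1))
  set G : Ω → ℝ := fun ω => exp (U ω * (P ω - 1)) * P ω + exp (U ω * P ω) * (1 - P ω)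
  have hUm := hU.measurable
  have hPm := hP.measurable
  have hCm : StronglyMeasurable[m] C := Measurable.stronglyMeasurable (by fun_prop)
  have hGm : StronglyMeasurable[m] G := Measurable.stronglyMeasurable (by fun_prop)
  have hP1 (ω : Ω) : |P ω| ≤ 1 := abs_le_one_of_mem_Icc_sub_one (hPb ω) ⟨by linarith, le_rfl⟩
  have hP0 (ω : Ω) : |P ω - 1| ≤ 1 :=
    abs_le_one_of_mem_Icc_sub_one (hPb ω) ⟨le_rfl, by linarith⟩
  have hA (ω : Ω) := exp_le_exp.2 (mul_le_of_abs_le_of_abs_le_one (hUb ω) (hP0 ω))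
  have hB (ω : Ω) := exp_le_exp.2 (mul_le_of_abs_le_of_abs_le_one (hUb ω) (hP1 ω))
  have hei : Integrable e μ := Integrable.of_mem_Icc (-1) 1 he.aemeasurable
    (ae_of_all _ fun ω => abs_le.1 (abs_le_one_of_mem_Icc_sub_one (hPb ω) (heb ω)))
  have hCe : Integrable (C * e) μ := by
    refine hei.bdd_mul (c := exp K) (hCm.mono hm).aestronglyMeasurable (ae_of_all _ fun ω => ?_)
    rw [Real.norm_eq_abs, abs_sub_le_iff]
    constructor <;> linarith [hA ω, hB ω, exp_pos (U ω * P ω), exp_pos (U ω * (P ω - 1))]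
  have hGi : Integrable G μ := by
    refine Integrable.of_mem_Icc 0 (exp K) (hGm.mono hm).measurable.aemeasurable
      (ae_of_all _ fun ω => ?_)
    obtain ⟨h0, h1⟩ := hPb ω
    constructor
    · nlinarith [mul_nonneg (exp_pos (U ω * (P ω - 1))).le h0,
        mul_nonneg (exp_pos (U ω * P ω)).le (sub_nonneg.2 h1)]
    · nlinarith [mul_le_mul_of_nonneg_right (hA ω) h0,
        mul_le_mul_of_nonneg_right (hB ω) (sub_nonneg.2 h1)]
  have hexpi : Integrable (fun ω => exp (U ω * e ω)) μ := integrable_exp_mul_of_abs_le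
    (hU.mono hm).measurable he hUb fun ω => abs_le_one_of_mem_Icc_sub_one (hPb ω) (heb ω)
  calc μ[fun ω => exp (U ω * e ω) | m]
      ≤ᵐ[μ] μ[C * e + G | m] :=
        condExp_mono hexpi (hCe.add hGi) (ae_of_all _ fun ω => exp_mul_le_chord (heb ω) (U ω))
    _ =ᵐ[μ] C * μ[e | m] + G := by
        filter_upwards [condExp_add hCe hGi m, condExp_mul_of_stronglyMeasurable_left hCm hCe hei]
          with ω h1 h2
        rw [h1, Pi.add_apply, h2, condExp_of_stronglyMeasurable hm hGm hGi]; rfl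
    _ =ᵐ[μ] G := by filter_upwards [he0] with ω h; simp [h]
    _ ≤ᵐ[μ] fun ω => exp (U ω ^ 2 / 8) := ae_of_all _ fun ω => by
        have := two_point_mgf_le (p := 1 - P ω)
          ⟨by linarith [(hPb ω).2], by linarith [(hPb ω).1]⟩ (U ω)
        convert this using 1
        simp only [G]; ring_nf

end Hoeffding

section Ville

variable {Ω : Type*} {m0 : MeasurableSpace Ω} {μ : Measure Ω} [IsFiniteMeasure μ]
  {ℱ : Filtration ℕ m0} {W : ℕ → Ω → ℝ}

lemma MeasureTheory.Supermartingale.integral_stoppedValue_le (hW : Supermartingale W ℱ μ)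
    {τ : Ω → ℕ∞} (hτ : IsStoppingTime ℱ τ) {N : ℕ} (hτN : ∀ ω, τ ω ≤ N) :
    ∫ ω, stoppedValue W τ ω ∂μ ≤ ∫ ω, W 0 ω ∂μ := by
  have := hW.neg.expected_stoppedValue_mono (isStoppingTime_const ℱ 0) hτ (fun _ => zero_le) hτN
  rw [show stoppedValue (-W) τ = -stoppedValue W τ from rfl] at this
  simpa only [stoppedValue_const, Pi.neg_apply, integral_neg, neg_le_neg_iff] using this

/-- Ville's inequality. -/
lemma MeasureTheory.Supermartingale.measure_exists_le_le (hW : Supermartingale W ℱ μ)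
    (hW0 : 0 ≤ W) {c : ℝ} (hc : 0 < c) :
    μ {ω | ∃ n, c ≤ W n ω} ≤ ENNReal.ofReal ((∫ ω, W 0 ω ∂μ) / c) := by
  have hfinite (N : ℕ) : μ {ω | ∃ n ≤ N, c ≤ W n ω} ≤ ENNReal.ofReal ((∫ ω, W 0 ω ∂μ) / c) := by
    set τ : Ω → ℕ∞ := fun ω => (hittingBtwn W (Set.Ici c) 0 N ω : ℕ)
    have hτ : IsStoppingTime ℱ τ :=
      hW.stronglyAdapted.adapted.isStoppingTime_hittingBtwn measurableSet_Ici
    have hτN : ∀ ω, τ ω ≤ N := fun ω => ENat.natCast_le_natCast.2 (hittingBtwn_le ω)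
    have hint : Integrable (stoppedValue W τ) μ := integrable_stoppedValue ℕ hτ hW.integrable hτN
    have hsub : {ω | ∃ n ≤ N, c ≤ W n ω} ⊆ {ω | c ≤ stoppedValue W τ ω} :=
      fun ω ⟨n, hn, hcn⟩ => stoppedValue_hittingBtwn_mem ⟨n, ⟨Nat.zero_le n, hn⟩, hcn⟩
    have hmarkov := mul_meas_ge_le_integral_of_nonneg (ae_of_all _ fun ω => hW0 _ ω) hint c
    calc μ {ω | ∃ n ≤ N, c ≤ W n ω} ≤ μ {ω | c ≤ stoppedValue W τ ω} := measure_mono hsub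
      _ = ENNReal.ofReal (μ.real {ω | c ≤ stoppedValue W τ ω}) :=
        (ofReal_measureReal (measure_ne_top _ _)).symm
      _ ≤ ENNReal.ofReal ((∫ ω, W 0 ω ∂μ) / c) :=
        ENNReal.ofReal_le_ofReal ((le_div_iff₀' hc).2
          (hmarkov.trans (hW.integral_stoppedValue_le hτ hτN)))
  have hmono : Monotone fun N => {ω | ∃ n ≤ N, c ≤ W n ω} :=
    fun N N' hN ω ⟨n, hn, hcn⟩ => ⟨n, hn.trans hN, hcn⟩
  have hunion : {ω | ∃ n, c ≤ W n ω} = ⋃ N, {ω | ∃ n ≤ N, c ≤ W n ω} := by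
    ext ω
    simp only [Set.mem_ofPred_eq, Set.mem_iUnion]
    exact ⟨fun ⟨n, hn⟩ => ⟨n, n, le_rfl, hn⟩, fun ⟨_, n, _, hn⟩ => ⟨n, hn⟩⟩
  rw [hunion, hmono.measure_iUnion]
  exact iSup_le hfinite

end Ville

section HoeffdingProcess

variable {Ω : Type*} {m0 : MeasurableSpace Ω} {μ : Measure Ω}
  {ℱ : Filtration ℕ m0} {U P e : ℕ → Ω → ℝ}

noncomputable def hoeffdingProcess (U e : ℕ → Ω → ℝ) (n : ℕ) (ω : Ω) : ℝ :=
  exp (∑ t ∈ Finset.Icc 1 n, (U t ω * e t ω - U t ω ^ 2 / 8))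

lemma hoeffdingProcess_zero : hoeffdingProcess U e 0 = 1 := by
  ext ω; simp [hoeffdingProcess]

lemma hoeffdingProcess_succ (n : ℕ) (ω : Ω) :
    hoeffdingProcess U e (n + 1) ω = hoeffdingProcess U e n ω * exp (-(U (n + 1) ω ^ 2 / 8))
      * exp (U (n + 1) ω * e (n + 1) ω) := by
  simp only [hoeffdingProcess, ← exp_add, Finset.sum_Icc_succ_top (Nat.le_add_left 1 n)]
  ring_nf

variable [IsProbabilityMeasure μ] {K : ℝ}

lemma supermartingale_hoeffdingProcess
    (hU : ∀ n, StronglyMeasurable[ℱ n] (U (n + 1))) (hUb : ∀ n ω, |U n ω| ≤ K)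
    (hP : ∀ n, StronglyMeasurable[ℱ n] (P (n + 1))) (hPb : ∀ n ω, P n ω ∈ Set.Icc (0 : ℝ) 1)
    (he : StronglyAdapted ℱ e) (heb : ∀ n ω, e n ω ∈ Set.Icc (P n ω - 1) (P n ω))
    (he0 : ∀ n, μ[e (n + 1) | ℱ n] =ᵐ[μ] 0) :
    Supermartingale (hoeffdingProcess U e) ℱ μ := by
  have hUm {n t : ℕ} (ht : t ∈ Finset.Icc 1 n) : Measurable[ℱ n] (U t) := by
    obtain ⟨k, rfl⟩ : ∃ k, t = k + 1 := ⟨t - 1, by grind⟩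
    exact ((hU k).mono (ℱ.mono (by grind))).measurable
  have hWm (n : ℕ) : Measurable[ℱ n] (hoeffdingProcess U e n) := by
    refine measurable_exp.comp (Finset.measurable_sum _ fun t ht => ?_)
    have := ((he t).mono (ℱ.mono (Finset.mem_Icc.1 ht).2)).measurable
    have := hUm ht
    fun_prop
  have hincr_le (n : ℕ) (ω : Ω) :
      ∑ t ∈ Finset.Icc 1 n, (U t ω * e t ω - U t ω ^ 2 / 8) ≤ (Finset.Icc 1 n).card • K :=
    Finset.sum_le_card_nsmul _ _ _ fun t _ => by
      have := mul_le_of_abs_le_of_abs_le_one (hUb t ω)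
        (abs_le_one_of_mem_Icc_sub_one (hPb t ω) (heb t ω))
      nlinarith [sq_nonneg (U t ω)]
  have hWi (n : ℕ) : Integrable (hoeffdingProcess U e n) μ :=
    Integrable.of_mem_Icc 0 (exp ((Finset.Icc 1 n).card • K))
      ((hWm n).mono (ℱ.le n) le_rfl).aemeasurable
      (ae_of_all _ fun ω => ⟨(exp_pos _).le, exp_le_exp.2 (hincr_le n ω)⟩)
  refine supermartingale_nat (fun n => (hWm n).stronglyMeasurable) hWi fun n => ?_
  set G : Ω → ℝ := fun ω => hoeffdingProcess U e n ω * exp (-(U (n + 1) ω ^ 2 / 8))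
  have hGm : StronglyMeasurable[ℱ n] G := by
    have := (hU n).measurable; have := hWm n
    exact Measurable.stronglyMeasurable (by fun_prop)
  have hsucc : hoeffdingProcess U e (n + 1) = G * fun ω => exp (U (n + 1) ω * e (n + 1) ω) :=
    funext (hoeffdingProcess_succ n)
  have hem := (he (n + 1)).measurable.mono (ℱ.le _) le_rfl
  have hexpi : Integrable (fun ω => exp (U (n + 1) ω * e (n + 1) ω)) μ :=
    integrable_exp_mul_of_abs_le ((hU n).measurable.mono (ℱ.le n) le_rfl) hem (hUb (n + 1))
      fun ω => abs_le_one_of_mem_Icc_sub_one (hPb (n + 1) ω) (heb (n + 1) ω)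
  calc μ[hoeffdingProcess U e (n + 1) | ℱ n]
      =ᵐ[μ] G * μ[fun ω => exp (U (n + 1) ω * e (n + 1) ω) | ℱ n] := by
        rw [hsucc]
        exact condExp_mul_of_stronglyMeasurable_left hGm (hsucc ▸ hWi (n + 1)) hexpi
    _ ≤ᵐ[μ] hoeffdingProcess U e n := by
        filter_upwards [condExp_exp_mul_le (ℱ.le n) (hU n) (hUb (n + 1)) (hP n) (hPb (n + 1))
          hem (heb (n + 1)) (he0 n)] with ω hω
        calc G ω * _ ≤ G ω * exp (U (n + 1) ω ^ 2 / 8) :=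
              mul_le_mul_of_nonneg_left hω (by simp only [G, hoeffdingProcess]; positivity)
          _ = hoeffdingProcess U e n ω := by
            simp only [G, mul_assoc, ← exp_add, neg_add_cancel, exp_zero, mul_one]

theorem measure_exists_le_sum_le_exp_neg
    (hU : ∀ n, StronglyMeasurable[ℱ n] (U (n + 1))) (hUb : ∀ n ω, |U n ω| ≤ K)
    (hP : ∀ n, StronglyMeasurable[ℱ n] (P (n + 1))) (hPb : ∀ n ω, P n ω ∈ Set.Icc (0 : ℝ) 1)
    (he : StronglyAdapted ℱ e) (heb : ∀ n ω, e n ω ∈ Set.Icc (P n ω - 1) (P n ω))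
    (he0 : ∀ n, μ[e (n + 1) | ℱ n] =ᵐ[μ] 0) (r : ℝ) :
    μ {ω | ∃ n, r ≤ ∑ t ∈ Finset.Icc 1 n, (U t ω * e t ω - U t ω ^ 2 / 8)}
      ≤ ENNReal.ofReal (exp (-r)) :=
  calc μ {ω | ∃ n, r ≤ ∑ t ∈ Finset.Icc 1 n, (U t ω * e t ω - U t ω ^ 2 / 8)}
      ≤ μ {ω | ∃ n, exp r ≤ hoeffdingProcess U e n ω} :=
        measure_mono fun ω ⟨n, hn⟩ => ⟨n, exp_le_exp.2 hn⟩
    _ ≤ ENNReal.ofReal ((∫ ω, hoeffdingProcess U e 0 ω ∂μ) / exp r) :=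
        (supermartingale_hoeffdingProcess hU hUb hP hPb he heb he0).measure_exists_le_le
          (fun _ _ => (exp_pos _).le) (exp_pos r)
    _ = ENNReal.ofReal (exp (-r)) := by simp [hoeffdingProcess_zero, exp_neg]

end HoeffdingProcess

section Regression

variable {Ω X : Type*} {m0 : MeasurableSpace Ω} {μ : Measure Ω}

def cumExcessLoss (x : ℕ → Ω → X) (y Q : ℕ → Ω → ℝ) (fstar f : X → ℝ) (τ : ℕ) (ω : Ω) : ℝ :=
  ∑ t ∈ Finset.Icc 1 τ, Q t ω * ((f (x t ω) - y t ω) ^ 2 - (fstar (x t ω) - y t ω) ^ 2)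

def cumSqDist (x : ℕ → Ω → X) (Q : ℕ → Ω → ℝ) (fstar f : X → ℝ) (τ : ℕ) (ω : Ω) : ℝ :=
  ∑ t ∈ Finset.Icc 1 τ, Q t ω * (f (x t ω) - fstar (x t ω)) ^ 2

lemma sum_hoeffding_increment_eq {x : ℕ → Ω → X} {y Q : ℕ → Ω → ℝ} {fstar f : X → ℝ}
    (hQv : ∀ t ω, Q t ω = 0 ∨ Q t ω = 1) (s : ℝ) (τ : ℕ) (ω : Ω) :
    ∑ t ∈ Finset.Icc 1 τ,
        (2 * s * (Q t ω * (f (x t ω) - fstar (x t ω))) * (fstar (x t ω) - y t ω)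
          - (2 * s * (Q t ω * (f (x t ω) - fstar (x t ω)))) ^ 2 / 8)
      = s * (cumExcessLoss x y Q fstar f τ ω - cumSqDist x Q fstar f τ ω)
        - s ^ 2 * cumSqDist x Q fstar f τ ω / 2 := by
  simp only [cumExcessLoss, cumSqDist, ← Finset.sum_sub_distrib, Finset.mul_sum, Finset.sum_div]
  refine Finset.sum_congr rfl fun t _ => ?_
  rcases hQv t ω with h | h <;> rw [h] <;> ring

variable [MeasurableSpace X] [IsProbabilityMeasure μ] {ℱ : Filtration ℕ m0}
  {x : ℕ → Ω → X} {y Q : ℕ → Ω → ℝ} {fstar f : X → ℝ}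

theorem measure_exists_le_cumExcessLoss_le (hstarm : Measurable fstar)
    (hstarb : ∀ z, fstar z ∈ Set.Icc (0 : ℝ) 1) (hfm : Measurable f)
    (hfb : ∀ z, f z ∈ Set.Icc (0 : ℝ) 1)
    (hx : ∀ t, Measurable[ℱ (t - 1)] (x t))
    (hQmeas : ∀ t, Measurable[ℱ (t - 1)] (Q t))
    (hQv : ∀ t ω, Q t ω = 0 ∨ Q t ω = 1)
    (hy : ∀ t, Measurable[ℱ t] (y t)) (hyb : ∀ t ω, y t ω ∈ Set.Icc (0 : ℝ) 1)
    (hrealizable : ∀ t, μ[y t | ℱ (t - 1)] =ᵐ[μ] fun ω => fstar (x t ω)) (s r : ℝ) :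
    μ {ω | ∃ τ, r ≤ s * (cumExcessLoss x y Q fstar f τ ω - cumSqDist x Q fstar f τ ω)
        - s ^ 2 * cumSqDist x Q fstar f τ ω / 2} ≤ ENNReal.ofReal (exp (-r)) := by
  have hxn (n : ℕ) : Measurable[ℱ n] (x (n + 1)) := by simpa using hx (n + 1)
  have hQn (n : ℕ) : Measurable[ℱ n] (Q (n + 1)) := by simpa using hQmeas (n + 1)
  have hstarn (n : ℕ) : Measurable[ℱ n] fun ω => fstar (x (n + 1) ω) := hstarm.comp (hxn n)
  simp_rw [← sum_hoeffding_increment_eq hQv s]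
  refine measure_exists_le_sum_le_exp_neg (K := 2 * |s|) (P := fun t ω => fstar (x t ω))
    (fun n => ?_) (fun t ω => ?_) (fun n => (hstarn n).stronglyMeasurable) (fun t ω => hstarb _)
    (fun n => ?_) (fun t ω => ?_) (fun n => ?_) r
  · have := hxn n; have := hQn n
    exact Measurable.stronglyMeasurable (by fun_prop)
  · have hd : |f (x t ω) - fstar (x t ω)| ≤ 1 :=
      abs_le.2 ⟨by linarith [(hfb (x t ω)).1, (hstarb (x t ω)).2],
        by linarith [(hfb (x t ω)).2, (hstarb (x t ω)).1]⟩
    have hQ : |Q t ω| ≤ 1 := by rcases hQv t ω with h | h <;> simp [h]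
    rw [abs_mul, abs_mul, abs_mul, abs_two]
    have := mul_le_one₀ hQ (abs_nonneg _) hd
    nlinarith [abs_nonneg s]
  · have := (hx n).mono (ℱ.mono (Nat.sub_le n 1)) le_rfl
    have := hy n
    exact Measurable.stronglyMeasurable (by fun_prop)
  · constructor <;> linarith [(hyb t ω).1, (hyb t ω).2]
  · have hstari : Integrable (fun ω => fstar (x (n + 1) ω)) μ :=
      Integrable.of_mem_Icc 0 1 ((hstarn n).mono (ℱ.le n) le_rfl).aemeasurable
        (ae_of_all _ fun ω => hstarb _)
    have hyi : Integrable (y (n + 1)) μ :=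
      Integrable.of_mem_Icc 0 1 ((hy (n + 1)).mono (ℱ.le _) le_rfl).aemeasurable
        (ae_of_all _ (hyb (n + 1)))
    filter_upwards [condExp_sub hstari hyi (ℱ n), hrealizable (n + 1)] with ω h1 h2
    rw [Pi.sub_apply, condExp_of_stronglyMeasurable (ℱ.le n) (hstarn n).stronglyMeasurable hstari]
      at h1
    rw [add_tsub_cancel_right] at h2
    exact h1.trans (by rw [h2, sub_self]; rfl)

end Regression

lemma measure_biUnion_finset_le_ofReal {Ω ι : Type*} {m0 : MeasurableSpace Ω} {μ : Measure Ω}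
    (S : Finset ι) (A : ι → Set Ω) {ε : ℝ} (hε : 0 ≤ ε)
    (hA : ∀ i ∈ S, μ (A i) ≤ ENNReal.ofReal (ε / S.card)) :
    μ (⋃ i ∈ S, A i) ≤ ENNReal.ofReal ε := by
  calc μ (⋃ i ∈ S, A i) ≤ ∑ i ∈ S, μ (A i) := measure_biUnion_finset_le S A
    _ ≤ S.card • ENNReal.ofReal (ε / S.card) := Finset.sum_le_card_nsmul _ _ _ hA
    _ = ENNReal.ofReal (S.card * (ε / S.card)) := by
        rw [nsmul_eq_mul, ENNReal.ofReal_mul (Nat.cast_nonneg _), ENNReal.ofReal_natCast]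
    _ ≤ ENNReal.ofReal ε := by
        refine ENNReal.ofReal_le_ofReal ?_
        rcases (Nat.cast_nonneg (α := ℝ) S.card).eq_or_lt with h | h
        · rw [← h, zero_mul]; exact hε
        · rw [mul_div_cancel₀ _ h.ne']

lemma ofReal_one_sub_le_measure_compl {Ω : Type*} {m0 : MeasurableSpace Ω} {μ : Measure Ω}
    [IsProbabilityMeasure μ] {A : Set Ω} {δ : ℝ} (hδ : 0 ≤ δ) (hA : μ A ≤ ENNReal.ofReal δ) :
    ENNReal.ofReal (1 - δ) ≤ μ Aᶜ :=
  calc ENNReal.ofReal (1 - δ) = 1 - ENNReal.ofReal δ := by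
        rw [ENNReal.ofReal_sub _ hδ, ENNReal.ofReal_one]
    _ ≤ 1 - μ A := tsub_le_tsub_left hA 1
    _ ≤ μ Aᶜ := by
        rw [tsub_le_iff_left, ← measure_univ (μ := μ)]
        exact measure_univ_le_add_compl A

/-- Anytime (optional-stopping) concentration bound: with probability at least `1 - δ`,
simultaneously for every `f ∈ F` and every `τ ∈ ℕ`,
`Σ_{t=1}^τ M_t(f) ≤ (3/2)·Σ_{t=1}^τ Q_t·(f(x_t) - f⋆(x_t))² + log(2|F|/δ)` and
`Σ_{t=1}^τ Q_t·(f(x_t) - f⋆(x_t))² ≤ 2·Σ_{t=1}^τ M_t(f) + 2·log(2|F|/δ)`, where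
`M_t(f) = Q_t·((f(x_t) - y_t)² - (f⋆(x_t) - y_t)²)`.  Here `x_t` and `Q_t` are
`𝔉̄_{t-1}`-measurable, `y_t` is `𝔉̄_t`-measurable, and `E[y_t | 𝔉̄_{t-1}] = f⋆(x_t)`
almost surely. -/
theorem stmt_12 {Ω X : Type*} {m0 : MeasurableSpace Ω} [MeasurableSpace X]
    (μ : Measure Ω) [IsProbabilityMeasure μ]
    (ℱ : Filtration ℕ m0)
    (x : ℕ → Ω → X) (y Q : ℕ → Ω → ℝ)
    (fstar : X → ℝ) (hstarm : Measurable fstar)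
    (hstarb : ∀ z, fstar z ∈ Set.Icc (0 : ℝ) 1)
    (F : Finset (X → ℝ)) (hFm : ∀ f ∈ F, Measurable f)
    (hFb : ∀ f ∈ F, ∀ z, f z ∈ Set.Icc (0 : ℝ) 1)
    (hx : ∀ t, Measurable[ℱ (t - 1)] (x t))
    (hQmeas : ∀ t, Measurable[ℱ (t - 1)] (Q t))
    (hQv : ∀ t ω, Q t ω = 0 ∨ Q t ω = 1)
    (hy : ∀ t, Measurable[ℱ t] (y t)) (hyb : ∀ t ω, y t ω ∈ Set.Icc (0 : ℝ) 1)
    (hrealizable : ∀ t, μ[y t | ℱ (t - 1)] =ᵐ[μ] fun ω => fstar (x t ω))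
    (δ : ℝ) (hδ : δ ∈ Set.Ioo (0 : ℝ) 1) :
    ENNReal.ofReal (1 - δ) ≤
      μ {ω | ∀ f ∈ F, ∀ τ : ℕ,
        ((∑ t ∈ Finset.Icc 1 τ,
            Q t ω * ((f (x t ω) - y t ω) ^ 2 - (fstar (x t ω) - y t ω) ^ 2))
          ≤ (3 / 2) * (∑ t ∈ Finset.Icc 1 τ, Q t ω * (f (x t ω) - fstar (x t ω)) ^ 2)
            + Real.log (2 * (F.card : ℝ) / δ))
        ∧ ((∑ t ∈ Finset.Icc 1 τ, Q t ω * (f (x t ω) - fstar (x t ω)) ^ 2)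
          ≤ 2 * (∑ t ∈ Finset.Icc 1 τ,
              Q t ω * ((f (x t ω) - y t ω) ^ 2 - (fstar (x t ω) - y t ω) ^ 2))
            + 2 * Real.log (2 * (F.card : ℝ) / δ))} := by
  obtain ⟨hδ0, -⟩ := hδ
  set r := Real.log (2 * (F.card : ℝ) / δ)
  set bad : (X → ℝ) × ℝ → Set Ω := fun p => {ω | ∃ τ,
    r ≤ p.2 * (cumExcessLoss x y Q fstar p.1 τ ω - cumSqDist x Q fstar p.1 τ ω)
      - p.2 ^ 2 * cumSqDist x Q fstar p.1 τ ω / 2}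
  have hbad : μ (⋃ p ∈ F ×ˢ {1, -1}, bad p) ≤ ENNReal.ofReal δ := by
    refine measure_biUnion_finset_le_ofReal _ _ hδ0.le fun p hp => ?_
    obtain ⟨hf, -⟩ := Finset.mem_product.1 hp
    have hF : (0 : ℝ) < F.card := Nat.cast_pos.2 (Finset.card_pos.2 ⟨_, hf⟩)
    convert measure_exists_le_cumExcessLoss_le hstarm hstarb (hFm _ hf) (hFb _ hf) hx hQmeas hQv
      hy hyb hrealizable p.2 r using 2
    rw [exp_neg, exp_log (by positivity), Finset.card_product,
      Finset.card_pair (by norm_num)]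
    push_cast
    field_simp
  have hgood : (⋃ p ∈ F ×ˢ {1, -1}, bad p)ᶜ ⊆ {ω | ∀ f ∈ F, ∀ τ : ℕ,
      cumExcessLoss x y Q fstar f τ ω ≤ 3 / 2 * cumSqDist x Q fstar f τ ω + r ∧
        cumSqDist x Q fstar f τ ω ≤ 2 * cumExcessLoss x y Q fstar f τ ω + 2 * r} := by
    intro ω hω f hf τ
    simp only [Set.mem_compl_iff, Set.mem_iUnion, not_exists] at hω
    have hpos := hω (f, 1) (by simp [hf])
    have hneg := hω (f, -1) (by simp [hf])
    simp only [bad, Set.mem_ofPred_eq, not_exists, not_le] at hpos hneg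
    constructor <;> [linarith [hpos τ]; linarith [hneg τ]]
  exact (ofReal_one_sub_le_measure_compl hδ0.le hbad).trans (measure_mono hgood)
end

section
/- Let F be a set of functions X → [0,1], f⋆ : X → [0,1], ζ > 0, and suppose d := ĕ_{f⋆}(F, ζ) is finite with d ≥ 1. Then for every finite sequence z_1, …, z_τ in X with τ ≥ 1, setting K := ⌊(τ − 1)/d⌋, there exists an index j ∈ {1, …, τ} and K pairwise disjoint subsequences of (z_1, …, z_{j−1}) such that z_j is ζ-dependent on each of these K subsequences. -/
open scoped ENNReal

/-- `x` is `ζ`-dependent (with respect to `F` and `f⋆`) on the finite subsequence of the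
sequence `z` indexed by `S`: every `f ∈ F` with `Σ_{i ∈ S} (f (z i) - f⋆ (z i))² ≤ ζ²`
satisfies `|f x - f⋆ x| ≤ ζ`.  (Dependence only involves the multiset of elements of a
subsequence, so indexing subsequences by finite index sets is equivalent to the list
formulation.) -/
def ZetaDep {X : Type*} (F : Set (X → ℝ)) (fstar : X → ℝ) (ζ : ℝ)
    (z : ℕ → X) (S : Finset ℕ) (x : X) : Prop :=
  ∀ f ∈ F, (∑ i ∈ S, (f (z i) - fstar (z i)) ^ 2 ≤ ζ ^ 2) → |f x - fstar x| ≤ ζ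

/-- `ĕ_{f⋆}(F, ζ)`: the length of the longest sequence each of whose elements is
`ζ`-independent of all its predecessors (valued in `ℝ≥0∞`). -/
noncomputable def eluderLenAt {X : Type*} (F : Set (X → ℝ)) (fstar : X → ℝ)
    (ζ : ℝ) : ℝ≥0∞ :=
  ⨆ z : ℕ → X, ⨆ m : ℕ,
    ⨆ _ : ∀ i < m, ¬ ZetaDep F fstar ζ z (Finset.range i) (z i), (m : ℝ≥0∞)

/-!
Distribute the indices `1, 2, …` greedily into `K` buckets, putting `t` into some bucket on
which `z t` is `ζ`-independent. If at some step `j` the point `z j` is `ζ`-dependent on every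
bucket, the buckets built so far are the required subsequences. Otherwise all of `1, …, τ` get
placed; each bucket, read in increasing order, is a sequence whose elements are `ζ`-independent
of their predecessors, so it has at most `d` elements, and `τ ≤ K d ≤ τ - 1`.
-/

open Finset Function

theorem Nat.image_nth_range_eq_filter_lt (S : Finset ℕ) {i : ℕ} (hi : i < #S) :
    (range i).image (Nat.nth (· ∈ S)) = {j ∈ S | j < Nat.nth (· ∈ S) i} := by
  have hf : (Set.ofPred (· ∈ S)).Finite := S.finite_toSet
  have hcard : hf.toFinset = S := S.finite_toSet_toFinset
  rw [← hcard] at hi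
  ext k
  simp only [mem_image, mem_range, mem_filter]
  constructor
  · rintro ⟨j, hj, rfl⟩
    exact ⟨Nat.nth_mem_of_lt_card hf (hj.trans hi), Nat.nth_lt_nth_of_lt_card hf hj hi⟩
  · rintro ⟨hk, hlt⟩
    obtain ⟨j, hj, rfl⟩ := Nat.exists_lt_card_finite_nth_eq hf hk
    exact ⟨j, Nat.lt_of_nth_lt_nth_of_lt_card hf hlt hj, rfl⟩

section EluderChains

variable {X : Type*} {F : Set (X → ℝ)} {fstar : X → ℝ} {ζ : ℝ} {z : ℕ → X} {K : ℕ}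

theorem le_eluderLenAt {w : ℕ → X} {m : ℕ}
    (h : ∀ i < m, ¬ ZetaDep F fstar ζ w (range i) (w i)) :
    (m : ℝ≥0∞) ≤ eluderLenAt F fstar ζ :=
  le_iSup_of_le w <| le_iSup_of_le m <| le_iSup_of_le h le_rfl

theorem zetaDep_image_iff {g : ℕ → ℕ} {S : Finset ℕ} (hg : Set.InjOn g S) {x : X} :
    ZetaDep F fstar ζ z (S.image g) x ↔ ZetaDep F fstar ζ (z ∘ g) S x := by
  simp only [ZetaDep, sum_image hg, comp_apply]

variable (F fstar ζ z) in
def IsIndependentChain (S : Finset ℕ) : Prop :=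
  ∀ i ∈ S, ¬ ZetaDep F fstar ζ z {j ∈ S | j < i} (z i)

theorem IsIndependentChain.card_le_eluderLenAt {S : Finset ℕ}
    (h : IsIndependentChain F fstar ζ z S) : (#S : ℝ≥0∞) ≤ eluderLenAt F fstar ζ := by
  have hf : (Set.ofPred (· ∈ S)).Finite := S.finite_toSet
  have hcard : hf.toFinset = S := S.finite_toSet_toFinset
  refine le_eluderLenAt (w := z ∘ Nat.nth (· ∈ S)) fun i hi => ?_
  have hi' : i < #hf.toFinset := by rwa [hcard]
  have hinj : Set.InjOn (Nat.nth (· ∈ S)) (range i) :=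
    (Nat.nth_injOn hf).mono fun a ha => (mem_range.1 ha).trans hi'
  rw [← zetaDep_image_iff hinj, Nat.image_nth_range_eq_filter_lt S hi]
  exact h _ (Nat.nth_mem_of_lt_card hf hi')

theorem IsIndependentChain.insert {S : Finset ℕ} {t : ℕ} (h : IsIndependentChain F fstar ζ z S)
    (hlt : ∀ i ∈ S, i < t) (ht : ¬ ZetaDep F fstar ζ z S (z t)) :
    IsIndependentChain F fstar ζ z (insert t S) := by
  intro i hi
  rcases mem_insert.1 hi with rfl | hi
  · rwa [filter_insert, if_neg (lt_irrefl i), filter_true_of_mem hlt]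
  · rw [filter_insert, if_neg (hlt i hi).not_gt]
    exact h i hi

variable (F fstar ζ z) in
structure IsChainDecomposition (B : Fin K → Finset ℕ) (n : ℕ) : Prop where
  subset_Icc : ∀ k, B k ⊆ Icc 1 n
  pairwise_disjoint : Pairwise (Disjoint on B)
  sum_card : ∑ k, #(B k) = n
  isIndependentChain : ∀ k, IsIndependentChain F fstar ζ z (B k)

theorem IsChainDecomposition.update_insert {B : Fin K → Finset ℕ} {n : ℕ} {k₀ : Fin K}
    (hB : IsChainDecomposition F fstar ζ z B n) (hk₀ : ¬ ZetaDep F fstar ζ z (B k₀) (z (n + 1))) :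
    IsChainDecomposition F fstar ζ z (update B k₀ (insert (n + 1) (B k₀))) (n + 1) := by
  have hnew : ∀ k, n + 1 ∉ B k := fun k h => by simpa using hB.subset_Icc k h
  constructor
  · intro k
    rcases eq_or_ne k k₀ with rfl | hk
    · rw [update_self]
      exact insert_subset (by simp) ((hB.subset_Icc k).trans (Icc_subset_Icc_right n.le_succ))
    · rw [update_of_ne hk]
      exact (hB.subset_Icc k).trans (Icc_subset_Icc_right n.le_succ)
  · intro k k' hne
    simp only [onFun, update_apply]
    split_ifs with hk hk'
    · exact absurd (hk.trans hk'.symm) hne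
    · subst_vars
      exact disjoint_insert_left.2 ⟨hnew k', hB.pairwise_disjoint hne⟩
    · subst_vars
      exact disjoint_insert_right.2 ⟨hnew k, hB.pairwise_disjoint hne⟩
    · exact hB.pairwise_disjoint hne
  · rw [← sum_erase_add _ _ (mem_univ k₀), update_self, card_insert_of_notMem (hnew k₀),
      ← hB.sum_card, ← sum_erase_add _ _ (mem_univ k₀), ← add_assoc]
    congr 2
    exact sum_congr rfl fun k hk => by rw [update_of_ne (ne_of_mem_erase hk)]
  · intro k
    rcases eq_or_ne k k₀ with rfl | hk
    · rw [update_self]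
      exact (hB.isIndependentChain k).insert
        (fun i hi => Nat.lt_succ_of_le (mem_Icc.1 (hB.subset_Icc k hi)).2) hk₀
    · rw [update_of_ne hk]
      exact hB.isIndependentChain k

theorem exists_dependent_or_isChainDecomposition (n : ℕ) :
    (∃ j, 1 ≤ j ∧ j ≤ n ∧ ∃ S : Fin K → Finset ℕ,
      (∀ k, ∀ i ∈ S k, 1 ≤ i ∧ i < j)
      ∧ (∀ k k', k ≠ k' → Disjoint (S k) (S k'))
      ∧ (∀ k, ZetaDep F fstar ζ z (S k) (z j)))
    ∨ ∃ B : Fin K → Finset ℕ, IsChainDecomposition F fstar ζ z B n := by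
  induction n with
  | zero => exact .inr ⟨fun _ => ∅, by simp, fun _ _ _ => disjoint_empty_left _, by simp,
      fun _ i hi => absurd hi (notMem_empty i)⟩
  | succ n ih =>
    rcases ih with ⟨j, hj₁, hjn, hS⟩ | ⟨B, hB⟩
    · exact .inl ⟨j, hj₁, hjn.trans n.le_succ, hS⟩
    by_cases hdep : ∀ k, ZetaDep F fstar ζ z (B k) (z (n + 1))
    · refine .inl ⟨n + 1, Nat.le_add_left 1 n, le_rfl, B, fun k i hi => ?_,
        fun k k' hne => hB.pairwise_disjoint hne, hdep⟩
      have := mem_Icc.1 (hB.subset_Icc k hi)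
      omega
    · obtain ⟨k₀, hk₀⟩ := not_forall.1 hdep
      exact .inr ⟨_, hB.update_insert hk₀⟩

end EluderChains

theorem stmt_13_general {X : Type*} (F : Set (X → ℝ))
    (fstar : X → ℝ) (ζ : ℝ)
    (d : ℕ) (hlen : eluderLenAt F fstar ζ = (d : ℝ≥0∞))
    (z : ℕ → X) (τ : ℕ) (hτ : 1 ≤ τ) :
    ∃ j, 1 ≤ j ∧ j ≤ τ ∧ ∃ S : Fin ((τ - 1) / d) → Finset ℕ,
      (∀ k, ∀ i ∈ S k, 1 ≤ i ∧ i < j)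
      ∧ (∀ k k', k ≠ k' → Disjoint (S k) (S k'))
      ∧ (∀ k, ZetaDep F fstar ζ z (S k) (z j)) := by
  refine (exists_dependent_or_isChainDecomposition τ).resolve_right ?_
  rintro ⟨B, hB⟩
  have hcard : ∀ k, #(B k) ≤ d := fun k => by
    exact_mod_cast hlen ▸ (hB.isIndependentChain k).card_le_eluderLenAt
  have : τ ≤ (τ - 1) / d * d := calc
    τ = ∑ k, #(B k) := hB.sum_card.symm
    _ ≤ ∑ _k : Fin ((τ - 1) / d), d := sum_le_sum fun k _ => hcard k
    _ = (τ - 1) / d * d := by simp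
  have := Nat.div_mul_le_self (τ - 1) d
  omega

/-- Pigeonhole claim in the eluder-dimension width-counting lemma: if
`d = ĕ_{f⋆}(F, ζ)` is finite with `d ≥ 1`, then for every finite sequence
`z_1, …, z_τ` (τ ≥ 1), setting `K = ⌊(τ - 1)/d⌋`, there is an index `j ∈ {1, …, τ}` and
`K` pairwise disjoint subsequences of `(z_1, …, z_{j-1})` on each of which `z_j` is
`ζ`-dependent. -/
theorem stmt_13 {X : Type*} (F : Set (X → ℝ))
    (hFb : ∀ f ∈ F, ∀ v, f v ∈ Set.Icc (0 : ℝ) 1)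
    (fstar : X → ℝ) (ζ : ℝ) (hζ : 0 < ζ)
    (d : ℕ) (hd : 1 ≤ d) (hlen : eluderLenAt F fstar ζ = (d : ℝ≥0∞))
    (z : ℕ → X) (τ : ℕ) (hτ : 1 ≤ τ) :
    ∃ j, 1 ≤ j ∧ j ≤ τ ∧ ∃ S : Fin ((τ - 1) / d) → Finset ℕ,
      (∀ k, ∀ i ∈ S k, 1 ≤ i ∧ i < j)
      ∧ (∀ k k', k ≠ k' → Disjoint (S k) (S k'))
      ∧ (∀ k, ZetaDep F fstar ζ z (S k) (z j)) :=
  stmt_13_general F fstar ζ d hlen z τ hτ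
end

section
/- Under the active-set hypotheses, if in addition β ≥ 1 and γ ∈ (0, 1], then Σ_{t=1}^{T} 1(Q_t = 1)·1(w_t > γ)·2w_t ≤ 68·(β/γ)·e_{f⋆}(F, γ/2). -/
open scoped ENNReal

/-- The value function eluder dimension `e_{f⋆}(F, ζ₀) = sup_{ζ ≥ ζ₀} ĕ_{f⋆}(F, ζ)`. -/
noncomputable def eluderDim {X : Type*} (F : Set (X → ℝ)) (fstar : X → ℝ)
    (ζ₀ : ℝ) : ℝ≥0∞ :=
  ⨆ ζ : ℝ, ⨆ _ : ζ₀ ≤ ζ, eluderLenAt F fstar ζ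

/-! For a level `ε ≥ γ`, every queried round with width `> ε` has a witness in its active set
that is `ε/2`-far from `f⋆` at `x_t`. Colour these rounds greedily, in increasing order, with
`K = ⌈16β/ε²⌉` colours so that the earlier rounds of the same colour carry squared deviation at
most `(ε/2)²` for the current witness: pigeonhole makes this possible, since all earlier queried
rounds together carry at most `4β ≤ K (ε/2)²`. Each colour class is then an `ε/2`-independent
sequence, so the number `N_ε` of such rounds satisfies `N_ε ε² ≤ 17 β e`. Hence the `k`-th
largest wide width is at most `√(17βe/k)`, so the `N` wide widths sum to at most `2√(17βe N)`,
and `N γ² ≤ 17βe` turns this into `34 β e / γ`. -/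

open Finset Filter Topology

section LevelSets

variable {ι : Type*}

lemma inv_sqrt_add_two_mul_sqrt_le {n : ℝ} (hn : 0 ≤ n) :
    (√(n + 1))⁻¹ + 2 * √n ≤ 2 * √(n + 1) := by
  have hpos : 0 < √(n + 1) := Real.sqrt_pos.2 (by linarith)
  have hsq : √(n + 1) ^ 2 = n + 1 := Real.sq_sqrt (by linarith)
  have hamgm : 2 * (√n * √(n + 1)) ≤ 2 * n + 1 := by
    nlinarith [sq_nonneg (√n - √(n + 1)), Real.sq_sqrt hn]
  rw [← le_sub_iff_add_le, inv_le_iff_one_le_mul₀ hpos]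
  nlinarith

lemma sum_le_two_mul_sqrt_mul_sqrt_card [DecidableEq ι] (s : Finset ι) (w : ι → ℝ) {A : ℝ}
    (h : ∀ t ∈ s, #{u ∈ s | w t ≤ w u} * w t ^ 2 ≤ A) :
    ∑ t ∈ s, w t ≤ 2 * √A * √(#s : ℝ) := by
  induction s using Finset.induction_on_min_value w with
  | empty => simp
  | insert a s ha hmin ih =>
    have hcard : #{u ∈ insert a s | w a ≤ w u} = #s + 1 := by
      rw [filter_true_of_mem (by simpa using hmin), card_insert_of_notMem ha]
    have hs : ∀ t ∈ s, #{u ∈ s | w t ≤ w u} * w t ^ 2 ≤ A := fun t ht ↦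
      le_trans (mul_le_mul_of_nonneg_right (by gcongr; exact subset_insert a s) (sq_nonneg _))
        (h t (mem_insert_of_mem ht))
    have ha' : w a ≤ √A * (√((#s : ℝ) + 1))⁻¹ := by
      have hle : w a ^ 2 ≤ A / (#s + 1) := by
        rw [le_div_iff₀ (by positivity), mul_comm]
        exact_mod_cast hcard ▸ h a (mem_insert_self a s)
      calc w a ≤ √(A / (#s + 1)) := (le_abs_self _).trans (Real.abs_le_sqrt hle)
        _ = √A * (√((#s : ℝ) + 1))⁻¹ := by rw [Real.sqrt_div' _ (by positivity), div_eq_mul_inv]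
    rw [sum_insert ha, card_insert_of_notMem ha, Nat.cast_succ]
    calc w a + ∑ t ∈ s, w t ≤ √A * (√((#s : ℝ) + 1))⁻¹ + 2 * √A * √(#s : ℝ) :=
          add_le_add ha' (ih hs)
      _ = √A * ((√((#s : ℝ) + 1))⁻¹ + 2 * √(#s : ℝ)) := by ring
      _ ≤ √A * (2 * √((#s : ℝ) + 1)) :=
        mul_le_mul_of_nonneg_left (inv_sqrt_add_two_mul_sqrt_le (by positivity))
          (Real.sqrt_nonneg _)
      _ = 2 * √A * √((#s : ℝ) + 1) := by ring

lemma card_le_mul_sq_le_of_forall_card_lt {s : Finset ι} {w : ι → ℝ} {γ A : ℝ}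
    (h : ∀ ε, γ ≤ ε → #{u ∈ s | ε < w u} * ε ^ 2 ≤ A) {t : ι} (ht : γ < w t) :
    #{u ∈ s | w t ≤ w u} * w t ^ 2 ≤ A := by
  have hcont : Tendsto (fun ε : ℝ ↦ #{u ∈ s | w t ≤ w u} * ε ^ 2) (𝓝[<] w t)
      (𝓝 (#{u ∈ s | w t ≤ w u} * w t ^ 2)) :=
    ((continuous_const.mul (continuous_pow 2)).tendsto _).mono_left nhdsWithin_le_nhds
  refine le_of_tendsto hcont (eventually_of_mem (Ioo_mem_nhdsLT ht) fun ε hε ↦ ?_)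
  have hsub : {u ∈ s | w t ≤ w u} ⊆ {u ∈ s | ε < w u} :=
    monotone_filter_right s fun _ _ hu ↦ hε.2.trans_le hu
  exact le_trans (mul_le_mul_of_nonneg_right (by exact_mod_cast card_le_card hsub) (sq_nonneg _))
    (h ε hε.1.le)

lemma sum_le_two_mul_div_of_forall_card_lt {s : Finset ι} {w : ι → ℝ} {γ A : ℝ} (hγ : 0 < γ)
    (hs : ∀ t ∈ s, γ < w t) (h : ∀ ε, γ ≤ ε → #{u ∈ s | ε < w u} * ε ^ 2 ≤ A) :
    ∑ t ∈ s, w t ≤ 2 * A / γ := by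
  classical
  have hA : 0 ≤ A := (by positivity : (0 : ℝ) ≤ _).trans (h γ le_rfl)
  have hrank : ∀ t ∈ s, #{u ∈ s | w t ≤ w u} * w t ^ 2 ≤ A := fun t ht ↦
    card_le_mul_sq_le_of_forall_card_lt h (hs t ht)
  have hcard : (#s : ℝ) * γ ^ 2 ≤ A := by
    rcases s.eq_empty_or_nonempty with rfl | hne
    · simpa using hA
    obtain ⟨t, ht, hmin⟩ := exists_min_image s w hne
    have hall : {u ∈ s | w t ≤ w u} = s := filter_true_of_mem hmin
    calc (#s : ℝ) * γ ^ 2 ≤ #s * w t ^ 2 := by gcongr; exact (hs t ht).le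
      _ ≤ A := hall ▸ hrank t ht
  have hsqrt : √(#s : ℝ) ≤ √A / γ := by
    rw [le_div_iff₀ hγ, ← Real.sqrt_sq hγ.le, ← Real.sqrt_mul (by positivity)]
    exact Real.sqrt_le_sqrt hcard
  calc ∑ t ∈ s, w t ≤ 2 * √A * √(#s : ℝ) := sum_le_two_mul_sqrt_mul_sqrt_card s w hrank
    _ ≤ 2 * √A * (√A / γ) := by gcongr
    _ = 2 * A / γ := by rw [mul_assoc, mul_div_assoc', Real.mul_self_sqrt hA, mul_div_assoc]

end LevelSets

section Eluder

variable {X : Type*} {F : Set (X → ℝ)} {fstar : X → ℝ}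

lemma zetaDep_comp_iff {ζ : ℝ} {z : ℕ → X} {e : ℕ → ℕ} {S : Finset ℕ} (he : Set.InjOn e S)
    {y : X} : ZetaDep F fstar ζ (z ∘ e) S y ↔ ZetaDep F fstar ζ z (S.image e) y := by
  simp only [ZetaDep, sum_image he, Function.comp_apply]

lemma image_nth_range {B : Finset ℕ} {i : ℕ} (hi : i < #B) :
    (range i).image (Nat.nth (· ∈ B)) = {u ∈ B | u < Nat.nth (· ∈ B) i} := by
  have hf := B.finite_toSet
  have hcard : #hf.toFinset = #B := by rw [Finset.finite_toSet_toFinset]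
  ext u
  simp only [mem_image, mem_range, mem_filter]
  constructor
  · rintro ⟨k, hk, rfl⟩
    exact ⟨Nat.nth_mem_of_lt_card hf (by omega), Nat.nth_lt_nth_of_lt_card hf hk (by omega)⟩
  · rintro ⟨hu, hlt⟩
    obtain ⟨k, hk, rfl⟩ := Nat.exists_lt_card_finite_nth_eq hf hu
    exact ⟨k, Nat.lt_of_nth_lt_nth_of_lt_card hf hlt hk, rfl⟩

lemma card_le_eluderLenAt {ζ : ℝ} {z : ℕ → X} {B : Finset ℕ}
    (hB : ∀ t ∈ B, ¬ ZetaDep F fstar ζ z {u ∈ B | u < t} (z t)) :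
    (#B : ℝ≥0∞) ≤ eluderLenAt F fstar ζ := by
  have hf := B.finite_toSet
  have hcard : #hf.toFinset = #B := by rw [Finset.finite_toSet_toFinset]
  refine le_iSup_of_le (z ∘ Nat.nth (· ∈ B))
    (le_iSup_of_le #B (le_iSup_of_le (fun i hi ↦ ?_) le_rfl))
  have hinj : Set.InjOn (Nat.nth (· ∈ B)) (range i : Finset ℕ) := by
    refine (Nat.nth_injOn hf).mono fun a ha ↦ ?_
    rw [coe_range, Set.mem_Iio] at ha
    rw [Set.mem_Iio]
    omega
  rw [zetaDep_comp_iff hinj, image_nth_range hi]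
  exact hB _ (Nat.nth_mem_of_lt_card hf (by omega))

lemma eluderLenAt_le_eluderDim {ζ₀ ζ : ℝ} (h : ζ₀ ≤ ζ) :
    eluderLenAt F fstar ζ ≤ eluderDim F fstar ζ₀ :=
  le_iSup₂_of_le ζ h le_rfl

lemma exists_coloring_sum_le {W : Finset ℕ} {v : ℕ → ℕ → ℝ} {K : ℕ} {c : ℝ} (hK : 0 < K)
    (hv : ∀ t ∈ W, ∑ i ∈ W with i < t, v t i ≤ K * c) :
    ∃ b : ℕ → ℕ, ∀ t ∈ W, b t < K ∧ ∑ i ∈ W with i < t ∧ b i = b t, v t i ≤ c := by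
  suffices h : ∀ n, ∃ b : ℕ → ℕ, ∀ t ∈ W, t < n →
      b t < K ∧ ∑ i ∈ W with i < t ∧ b i = b t, v t i ≤ c by
    obtain ⟨n, hn⟩ := W.exists_nat_subset_range
    obtain ⟨b, hb⟩ := h n
    exact ⟨b, fun t ht ↦ hb t ht (mem_range.1 (hn ht))⟩
  intro n
  induction n with
  | zero => exact ⟨0, fun t _ ht ↦ absurd ht t.not_lt_zero⟩
  | succ n ih =>
    obtain ⟨b, hb⟩ := ih
    by_cases hn : n ∉ W
    · exact ⟨b, fun t ht htn ↦ hb t ht (lt_of_le_of_ne (Nat.lt_succ_iff.1 htn) fun h ↦ hn (h ▸ ht))⟩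
    obtain ⟨j, hj, hsum⟩ := exists_sum_fiber_le_of_maps_to_of_sum_le_nsmul
      (s := {i ∈ W | i < n}) (t := range K) (f := b) (w := v n) (b := c)
      (fun i hi ↦ by simp only [mem_filter] at hi; exact mem_range.2 (hb i hi.1 hi.2).1)
      (nonempty_range_iff.2 hK.ne') (by simpa [nsmul_eq_mul] using hv n (not_not.1 hn))
    refine ⟨Function.update b n j, fun t ht htn ↦ ?_⟩
    have hagree : ∀ i < t, Function.update b n j i = b i := fun i hi ↦
      Function.update_of_ne (by omega) _ _
    rcases Nat.lt_succ_iff_lt_or_eq.1 htn with htn | rfl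
    · rw [Function.update_of_ne htn.ne]
      refine ⟨(hb t ht htn).1, le_of_eq_of_le (sum_congr (filter_congr fun i _ ↦ ?_) fun _ _ ↦ rfl)
        (hb t ht htn).2⟩
      exact and_congr_right fun hi ↦ by rw [hagree i hi]
    · rw [Function.update_self]
      refine ⟨mem_range.1 hj, le_of_eq_of_le ?_ hsum⟩
      rw [filter_filter]
      exact sum_congr (filter_congr fun i _ ↦ and_congr_right fun hi ↦ by rw [hagree i hi])
        fun _ _ ↦ rfl

lemma card_le_mul_eluderLenAt {ζ : ℝ} {z : ℕ → X} {W : Finset ℕ} {g : ℕ → X → ℝ} {K : ℕ}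
    (hK : 0 < K) (hgF : ∀ t ∈ W, g t ∈ F) (hgz : ∀ t ∈ W, ζ < |g t (z t) - fstar (z t)|)
    (hsum : ∀ t ∈ W, ∑ i ∈ W with i < t, (g t (z i) - fstar (z i)) ^ 2 ≤ K * ζ ^ 2) :
    (#W : ℝ≥0∞) ≤ K * eluderLenAt F fstar ζ := by
  obtain ⟨b, hb⟩ := exists_coloring_sum_le hK hsum
  have hclass : ∀ j, (#{t ∈ W | b t = j} : ℝ≥0∞) ≤ eluderLenAt F fstar ζ := by
    refine fun j ↦ card_le_eluderLenAt (z := z) fun t ht hdep ↦ ?_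
    rw [mem_filter] at ht
    have hpred : {u ∈ {t ∈ W | b t = j} | u < t} = {i ∈ W | i < t ∧ b i = b t} := by
      ext i; simp only [mem_filter, ht.2]; tauto
    refine (hgz t ht.1).not_ge (hdep (g t) (hgF t ht.1) ?_)
    exact hpred ▸ (hb t ht.1).2
  rw [card_eq_sum_card_fiberwise fun t ht ↦ mem_range.2 (hb t ht).1, Nat.cast_sum]
  calc ∑ j ∈ range K, (#{t ∈ W | b t = j} : ℝ≥0∞) ≤ ∑ _j ∈ range K, eluderLenAt F fstar ζ :=
        sum_le_sum fun j _ ↦ hclass j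
    _ = K * eluderLenAt F fstar ζ := by rw [sum_const, card_range, nsmul_eq_mul]

end Eluder

section Width

variable {X : Type*} {G : Set (X → ℝ)} {y : X}

lemma width_le_one (hG : ∀ f ∈ G, f y ∈ Set.Icc (0 : ℝ) 1) : width G y ≤ 1 := by
  refine Real.sSup_le (fun r ⟨f, hf, f', hf', hr⟩ ↦ ?_) zero_le_one
  have h := hG f hf
  have h' := hG f' hf'
  rw [hr, abs_le]
  constructor <;> linarith [h.1, h.2, h'.1, h'.2]

lemma exists_half_lt_abs_sub_of_lt_width {f₀ : X → ℝ} (h₀ : f₀ ∈ G) {ε : ℝ}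
    (h : ε < width G y) : ∃ g ∈ G, ε / 2 < |g y - f₀ y| := by
  have hne : {r : ℝ | ∃ f ∈ G, ∃ f' ∈ G, r = |f y - f' y|}.Nonempty := ⟨0, f₀, h₀, f₀, h₀, by simp⟩
  obtain ⟨r, ⟨f, hf, f', hf', rfl⟩, hr⟩ := exists_lt_of_lt_csSup hne h
  have htri : |f y - f' y| ≤ |f y - f₀ y| + |f' y - f₀ y| := by
    simpa only [abs_sub_comm (f' y)] using abs_sub_le (f y) (f₀ y) (f' y)
  by_contra! hfar
  linarith [hfar f hf, hfar f' hf']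

end Width

section ActiveSet

variable {X : Type*} {F : Set (X → ℝ)} {fstar : X → ℝ} {T : ℕ} {x : ℕ → X} {Q : ℕ → ℝ} {β : ℝ}
  {Fs : ℕ → Set (X → ℝ)}

lemma sum_filter_lt_sq_le (hQ : ∀ t, Q t = 0 ∨ Q t = 1)
    (hFbound : ∀ t, 1 ≤ t → t ≤ T → ∀ f ∈ Fs t,
      ∑ i ∈ Icc 1 (t - 1), Q i * (f (x i) - fstar (x i)) ^ 2 ≤ 4 * β)
    {W : Finset ℕ} (hW : ∀ i ∈ W, 1 ≤ i ∧ Q i = 1) {t : ℕ} (ht : t ∈ Icc 1 T) {f : X → ℝ}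
    (hf : f ∈ Fs t) :
    ∑ i ∈ W with i < t, (f (x i) - fstar (x i)) ^ 2 ≤ 4 * β := by
  have hsub : {i ∈ W | i < t} ⊆ Icc 1 (t - 1) := fun i hi ↦ by
    rw [mem_filter] at hi
    have := (hW i hi.1).1
    rw [mem_Icc]
    omega
  calc ∑ i ∈ W with i < t, (f (x i) - fstar (x i)) ^ 2
      = ∑ i ∈ W with i < t, Q i * (f (x i) - fstar (x i)) ^ 2 :=
        sum_congr rfl fun i hi ↦ by rw [(hW i (mem_filter.1 hi).1).2, one_mul]
    _ ≤ ∑ i ∈ Icc 1 (t - 1), Q i * (f (x i) - fstar (x i)) ^ 2 :=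
        sum_le_sum_of_subset_of_nonneg hsub fun i _ _ ↦
          mul_nonneg (by rcases hQ i with h | h <;> simp [h]) (sq_nonneg _)
    _ ≤ 4 * β := hFbound t (mem_Icc.1 ht).1 (mem_Icc.1 ht).2 f hf

lemma card_le_ceil_mul_eluderLenAt (hQ : ∀ t, Q t = 0 ∨ Q t = 1) (hβ : 0 < β)
    (hFsub : ∀ t, Fs t ⊆ F) (hFstar : ∀ t, fstar ∈ Fs t)
    (hFbound : ∀ t, 1 ≤ t → t ≤ T → ∀ f ∈ Fs t,
      ∑ i ∈ Icc 1 (t - 1), Q i * (f (x i) - fstar (x i)) ^ 2 ≤ 4 * β)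
    {W : Finset ℕ} {ε : ℝ} (hε : 0 < ε)
    (hW : ∀ t ∈ W, t ∈ Icc 1 T ∧ Q t = 1 ∧ ε < width (Fs t) (x t)) :
    (#W : ℝ≥0∞) ≤ ⌈16 * β / ε ^ 2⌉₊ * eluderLenAt F fstar (ε / 2) := by
  choose! g hgFs hgfar using fun t ht ↦
    exists_half_lt_abs_sub_of_lt_width (hFstar t) (hW t ht).2.2
  have hK : 4 * β ≤ ⌈16 * β / ε ^ 2⌉₊ * (ε / 2) ^ 2 :=
    calc 4 * β = 16 * β / ε ^ 2 * (ε / 2) ^ 2 := by field_simp; ring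
      _ ≤ _ := by gcongr; exact Nat.le_ceil _
  have hqueried : ∀ i ∈ W, 1 ≤ i ∧ Q i = 1 := fun i hi ↦
    ⟨(mem_Icc.1 (hW i hi).1).1, (hW i hi).2.1⟩
  exact card_le_mul_eluderLenAt (Nat.ceil_pos.2 (by positivity))
    (fun t ht ↦ hFsub t (hgFs t ht)) hgfar fun t ht ↦
      (sum_filter_lt_sq_le hQ hFbound hqueried (hW t ht).1 (hgFs t ht)).trans hK

lemma card_mul_sq_le (hFb : ∀ f ∈ F, ∀ v, f v ∈ Set.Icc (0 : ℝ) 1)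
    (hQ : ∀ t, Q t = 0 ∨ Q t = 1) (hβ1 : 1 ≤ β)
    (hFsub : ∀ t, Fs t ⊆ F) (hFstar : ∀ t, fstar ∈ Fs t)
    (hFbound : ∀ t, 1 ≤ t → t ≤ T → ∀ f ∈ Fs t,
      ∑ i ∈ Icc 1 (t - 1), Q i * (f (x i) - fstar (x i)) ^ 2 ≤ 4 * β)
    {W : Finset ℕ} {ε D : ℝ} (hε : 0 < ε)
    (hW : ∀ t ∈ W, t ∈ Icc 1 T ∧ Q t = 1 ∧ ε < width (Fs t) (x t))
    (hD0 : 0 ≤ D) (hD : eluderLenAt F fstar (ε / 2) ≤ ENNReal.ofReal D) :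
    (#W : ℝ) * ε ^ 2 ≤ 17 * β * D := by
  rcases W.eq_empty_or_nonempty with rfl | ⟨t, ht⟩
  · simp only [card_empty, Nat.cast_zero, zero_mul]
    positivity
  have hε1 : ε ≤ 1 :=
    ((hW t ht).2.2.trans_le (width_le_one fun f hf ↦ hFb f (hFsub t hf) (x t))).le
  set K := ⌈16 * β / ε ^ 2⌉₊
  have hcard : (#W : ℝ) ≤ K * D := by
    have := (card_le_ceil_mul_eluderLenAt hQ (by linarith) hFsub hFstar hFbound hε hW).trans
      (by gcongr : (K : ℝ≥0∞) * _ ≤ K * ENNReal.ofReal D)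
    rwa [← ENNReal.ofReal_natCast, ← ENNReal.ofReal_natCast K, ← ENNReal.ofReal_mul (by positivity),
      ENNReal.ofReal_le_ofReal_iff (by positivity)] at this
  have hK : (K : ℝ) ≤ 16 * β / ε ^ 2 + 1 := (Nat.ceil_lt_add_one (by positivity)).le
  calc (#W : ℝ) * ε ^ 2 ≤ (16 * β / ε ^ 2 + 1) * D * ε ^ 2 := by
        gcongr; exact hcard.trans (by gcongr)
    _ = (16 * β + ε ^ 2) * D := by field_simp
    _ ≤ 17 * β * D := by gcongr; nlinarith

end ActiveSet

open Classical in
theorem stmt_15_general {X : Type*} (F : Set (X → ℝ))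
    (hFb : ∀ f ∈ F, ∀ v, f v ∈ Set.Icc (0 : ℝ) 1)
    (fstar : X → ℝ)
    (T : ℕ) (x : ℕ → X) (Q : ℕ → ℝ) (hQ : ∀ t, Q t = 0 ∨ Q t = 1)
    (β : ℝ) (hβ1 : 1 ≤ β)
    (Fs : ℕ → Set (X → ℝ)) (hFsub : ∀ t, Fs t ⊆ F) (hFstar : ∀ t, fstar ∈ Fs t)
    (hFbound : ∀ t, 1 ≤ t → t ≤ T → ∀ f ∈ Fs t,
      ∑ i ∈ Finset.Icc 1 (t - 1), Q i * (f (x i) - fstar (x i)) ^ 2 ≤ 4 * β)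
    (γ : ℝ) (hγ0 : 0 < γ) :
    ENNReal.ofReal (∑ t ∈ Finset.Icc 1 T,
        if Q t = 1 ∧ γ < width (Fs t) (x t) then 2 * width (Fs t) (x t) else 0)
      ≤ ENNReal.ofReal (68 * β / γ) * eluderDim F fstar (γ / 2) := by
  set d := eluderDim F fstar (γ / 2)
  rcases eq_or_ne d ⊤ with hd | hd
  · rw [hd, ENNReal.mul_top (by simp only [ne_eq, ENNReal.ofReal_eq_zero, not_le]; positivity)]
    exact le_top
  set w : ℕ → ℝ := fun t ↦ width (Fs t) (x t)
  set W := {t ∈ Icc 1 T | Q t = 1 ∧ γ < w t}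
  have hlevel : ∀ ε, γ ≤ ε → #{t ∈ W | ε < w t} * ε ^ 2 ≤ 17 * β * d.toReal := fun ε hε ↦
    card_mul_sq_le hFb hQ hβ1 hFsub hFstar hFbound (hγ0.trans_le hε)
      (fun t ht ↦ by simp only [W, mem_filter] at ht; exact ⟨ht.1.1, ht.1.2.1, ht.2⟩)
      ENNReal.toReal_nonneg
      ((ENNReal.ofReal_toReal hd).symm ▸ eluderLenAt_le_eluderDim (by linarith))
  have hsum := sum_le_two_mul_div_of_forall_card_lt hγ0 (fun t ht ↦ (mem_filter.1 ht).2.2) hlevel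
  rw [← sum_filter, ← mul_sum]
  calc ENNReal.ofReal (2 * ∑ t ∈ W, w t) ≤ ENNReal.ofReal (68 * β / γ * d.toReal) := by
        refine ENNReal.ofReal_le_ofReal ?_
        calc 2 * ∑ t ∈ W, w t ≤ 2 * (2 * (17 * β * d.toReal) / γ) := by gcongr
          _ = 68 * β / γ * d.toReal := by ring
    _ = ENNReal.ofReal (68 * β / γ) * d := by
        rw [ENNReal.ofReal_mul (by positivity), ENNReal.ofReal_toReal hd]

open Classical in
/-- Cumulative width bound: under the active-set hypotheses, with `β ≥ 1` and
`γ ∈ (0, 1]`, `Σ_{t=1}^T 1(Q_t = 1)·1(w_t > γ)·2w_t ≤ 68·(β/γ)·e_{f⋆}(F, γ/2)`. -/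
theorem stmt_15 {X : Type*} (F : Set (X → ℝ))
    (hFb : ∀ f ∈ F, ∀ v, f v ∈ Set.Icc (0 : ℝ) 1)
    (fstar : X → ℝ) (hstar : fstar ∈ F)
    (T : ℕ) (x : ℕ → X) (Q : ℕ → ℝ) (hQ : ∀ t, Q t = 0 ∨ Q t = 1)
    (β : ℝ) (hβ : 0 < β) (hβ1 : 1 ≤ β)
    (Fs : ℕ → Set (X → ℝ)) (hFsub : ∀ t, Fs t ⊆ F) (hFstar : ∀ t, fstar ∈ Fs t)
    (hFbound : ∀ t, 1 ≤ t → t ≤ T → ∀ f ∈ Fs t,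
      ∑ i ∈ Finset.Icc 1 (t - 1), Q i * (f (x i) - fstar (x i)) ^ 2 ≤ 4 * β)
    (γ : ℝ) (hγ0 : 0 < γ) (hγ1 : γ ≤ 1) :
    ENNReal.ofReal (∑ t ∈ Finset.Icc 1 T,
        if Q t = 1 ∧ γ < width (Fs t) (x t) then 2 * width (Fs t) (x t) else 0)
      ≤ ENNReal.ofReal (68 * β / γ) * eluderDim F fstar (γ / 2) :=
  stmt_15_general F hFb fstar T x Q hQ β hβ1 Fs hFsub hFstar hFbound γ hγ0
end

section
/- Fix γ ∈ (0, 1/2), κ ≥ 0, η ∈ [0, 1] and f̄ ∈ [0, 1] with |f̄ − η| ≤ κ, and let l ≤ u be real numbers with f̄ ∈ [l, u]. (i) If [l, u] ⊆ [1/2 − γ, 1/2 + γ], then (1/2 − γ) − min(η, 1 − η) ≤ κ. (ii) If 1/2 ∉ (l, u) and f̂ ∈ [l, u] with f̂ ≠ 1/2, then the prediction ŷ := sgn(2f̂ − 1) (where sgn(t) = +1 for t > 0 and −1 for t < 0) satisfies 1(ŷ = +1)·(1 − η) + 1(ŷ = −1)·η − min(η, 1 − η) ≤ 2κ. In both cases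 the pointwise Chow's excess error is at most 2κ. -/
/-- Pointwise content of the misspecified-model "no excess error on unqueried points"
lemma.  `η` is the conditional probability of the positive label, `f̄` approximates `η`
up to accuracy `κ`, and `[l, u]` is a confidence interval containing `f̄`.
(i) If `[l, u] ⊆ [1/2 - γ, 1/2 + γ]`, abstention (loss `1/2 - γ`) incurs at most `κ`
excess error over the Bayes error `min η (1 - η)`.
(ii) If `1/2 ∉ (l, u)` and `f̂ ∈ [l, u]` with `f̂ ≠ 1/2`, the prediction
`ŷ = sgn (2 f̂ - 1)` incurs at most `2κ` excess error: its misclassification probability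
(`1 - η` if `ŷ = +1`, `η` if `ŷ = -1`) exceeds `min η (1 - η)` by at most `2κ`.
In both cases the pointwise Chow's excess error is at most `2κ`. -/
theorem stmt_16 (γ κ η fbar l u : ℝ) (hγ0 : 0 < γ) (hγ : γ < 1 / 2) (hκ : 0 ≤ κ)
    (hη : η ∈ Set.Icc (0 : ℝ) 1) (hfbar01 : fbar ∈ Set.Icc (0 : ℝ) 1)
    (happrox : |fbar - η| ≤ κ) (hlu : l ≤ u) (hmem : fbar ∈ Set.Icc l u) :
    ((Set.Icc l u ⊆ Set.Icc (1 / 2 - γ) (1 / 2 + γ) →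
      (1 / 2 - γ) - min η (1 - η) ≤ κ)
    ∧ ((1 / 2 : ℝ) ∉ Set.Ioo l u → ∀ fhat ∈ Set.Icc l u, fhat ≠ 1 / 2 →
      (if 0 < 2 * fhat - 1 then 1 - η else η) - min η (1 - η) ≤ 2 * κ))
    ∧ ((Set.Icc l u ⊆ Set.Icc (1 / 2 - γ) (1 / 2 + γ) →
      (1 / 2 - γ) - min η (1 - η) ≤ 2 * κ)
    ∧ ((1 / 2 : ℝ) ∉ Set.Ioo l u → ∀ fhat ∈ Set.Icc l u, fhat ≠ 1 / 2 →
      (if 0 < 2 * fhat - 1 then 1 - η else η) - min η (1 - η) ≤ 2 * κ)) := by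
  obtain ⟨ha1, ha2⟩ := abs_le.mp happrox
  obtain ⟨hl, hu⟩ := hmem
  have part1 : Set.Icc l u ⊆ Set.Icc (1 / 2 - γ) (1 / 2 + γ) →
      (1 / 2 - γ) - min η (1 - η) ≤ κ := by
    intro hsub
    obtain ⟨hb1, hb2⟩ := hsub ⟨hl, hu⟩
    rcases min_cases η (1 - η) with ⟨hm, _⟩ | ⟨hm, _⟩ <;> rw [hm] <;> linarith
  have part2 : (1 / 2 : ℝ) ∉ Set.Ioo l u → ∀ fhat ∈ Set.Icc l u, fhat ≠ 1 / 2 →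
      (if 0 < 2 * fhat - 1 then 1 - η else η) - min η (1 - η) ≤ 2 * κ := by
    intro hno fhat hf hne
    obtain ⟨hf1, hf2⟩ := hf
    have hcase : u ≤ 1 / 2 ∨ 1 / 2 ≤ l := by
      by_contra h
      push_neg at h
      exact hno ⟨h.2, h.1⟩
    rcases hcase with hc | hc
    · have hlt : fhat < 1 / 2 := lt_of_le_of_ne (le_trans hf2 hc) hne
      rw [if_neg (by linarith)]
      rcases min_cases η (1 - η) with ⟨hm, _⟩ | ⟨hm, _⟩ <;> rw [hm] <;> linarith
    · have hgt : 1 / 2 < fhat := lt_of_le_of_ne (le_trans hc hf1) (Ne.symm hne)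
      rw [if_pos (by linarith)]
      rcases min_cases η (1 - η) with ⟨hm, _⟩ | ⟨hm, _⟩ <;> rw [hm] <;> linarith
  exact ⟨⟨part1, part2⟩, ⟨fun h => le_trans (part1 h) (by linarith), part2⟩⟩
end

section
/- Fix γ ∈ (0, 1/2) and 0 ≤ ζ0 < γ. Suppose the measurable classifier ĥ : X → {+1, −1, ⊥} enjoys proper abstention, i.e., {x : ĥ(x) = ⊥} ⊆ {x : |η(x) − 1/2| ≤ γ}, and define X_{ζ0,γ} := {x ∈ X : ζ0 < |η(x) − 1/2| ≤ γ}. Then the randomized version č satisfies err(č) − err(h⋆) ≤ γ·P_{x∼D_X}(x ∈ X_{ζ0,γ}) + ζ0 + E_{x∼D_X}[1(ĥ(x) ≠ ⊥)·(1(ĥ(x) = +1)·(1 − η(x)) + 1(ĥ(x) = −1)·η(x) − min(η(x), 1 − η(x)))]. -/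
open MeasureTheory

/-!
Pointwise in `x`, with `p = η x`: where `ĥ` commits, the excess risk of `č` over the Bayes
risk `min p (1 - p)` is exactly the committed term; where `ĥ` abstains it is
`1/2 - min p (1 - p) = |p - 1/2|`, which proper abstention bounds by `γ` on `X_{ζ₀,γ}` and
which is at most `ζ₀` elsewhere. Integrating this pointwise bound gives the decomposition.
-/

/-- Conditional error of `č` at a point where `P(y = +1) = p`; `some true` stands for `+1`. -/
noncomputable def randomizedRisk (o : Option Bool) (p : ℝ) : ℝ :=
  o.elim (1 / 2) fun b => if b then 1 - p else p

def bayesRisk (p : ℝ) : ℝ := min p (1 - p)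

def committedExcessRisk (o : Option Bool) (p : ℝ) : ℝ :=
  o.elim 0 fun b => (if b then 1 - p else p) - min p (1 - p)

lemma bayesRisk_eq_half_sub_abs (p : ℝ) : bayesRisk p = 1 / 2 - |p - 1 / 2| := by
  rcases le_total p (1 / 2) with hp | hp
  · rw [bayesRisk, min_eq_left (by linarith), abs_of_nonpos (by linarith)]; ring
  · rw [bayesRisk, min_eq_right (by linarith), abs_of_nonneg (by linarith)]; ring

lemma abs_sub_half_le_half {p : ℝ} (hp : p ∈ Set.Icc (0 : ℝ) 1) : |p - 1 / 2| ≤ 1 / 2 :=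
  abs_le.2 ⟨by linarith [hp.1], by linarith [hp.2]⟩

lemma abs_bayesRisk_le_one {p : ℝ} (hp : p ∈ Set.Icc (0 : ℝ) 1) : |bayesRisk p| ≤ 1 := by
  have := abs_sub_half_le_half hp
  rw [bayesRisk_eq_half_sub_abs, abs_le]
  constructor <;> linarith [abs_nonneg (p - 1 / 2)]

lemma abs_randomizedRisk_le_one (o : Option Bool) {p : ℝ} (hp : p ∈ Set.Icc (0 : ℝ) 1) :
    |randomizedRisk o p| ≤ 1 := by
  obtain ⟨hp0, hp1⟩ := hp
  rcases o with _ | _ | _ <;> simp only [randomizedRisk, Option.elim] <;> rw [abs_le] <;>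
    constructor <;> norm_num <;> linarith

lemma abs_committedExcessRisk_le_one (o : Option Bool) {p : ℝ} (hp : p ∈ Set.Icc (0 : ℝ) 1) :
    |committedExcessRisk o p| ≤ 1 := by
  have hmin : min p (1 - p) = 1 / 2 - |p - 1 / 2| := bayesRisk_eq_half_sub_abs p
  have := abs_sub_half_le_half hp
  rcases o with _ | _ | _ <;> simp only [committedExcessRisk, Option.elim, hmin] <;>
    rw [abs_le] <;> constructor <;> norm_num <;> linarith [abs_nonneg (p - 1 / 2), hp.1, hp.2]

lemma randomizedRisk_sub_bayesRisk_le {o : Option Bool} {p γ ζ₀ : ℝ} (hζ₀ : 0 ≤ ζ₀)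
    (hproper : o = none → |p - 1 / 2| ≤ γ) :
    randomizedRisk o p - bayesRisk p ≤
      {q | ζ₀ < |q - 1 / 2| ∧ |q - 1 / 2| ≤ γ}.indicator (fun _ => γ) p + ζ₀
        + committedExcessRisk o p := by
  set S : Set ℝ := {q | ζ₀ < |q - 1 / 2| ∧ |q - 1 / 2| ≤ γ}
  rcases o with _ | b
  · have hγ := hproper rfl
    simp only [randomizedRisk, committedExcessRisk, Option.elim, bayesRisk_eq_half_sub_abs]
    by_cases hp : ζ₀ < |p - 1 / 2|
    · rw [Set.indicator_of_mem (show p ∈ S from ⟨hp, hγ⟩)]; linarith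
    · rw [Set.indicator_of_notMem (fun hS => hp hS.1)]; linarith
  · have hS : 0 ≤ S.indicator (fun _ => γ) p :=
      Set.indicator_nonneg (fun q hq => (abs_nonneg _).trans hq.2) p
    simp only [randomizedRisk, committedExcessRisk, Option.elim, bayesRisk]
    linarith

lemma measurable_randomizedRisk (o : Option Bool) : Measurable (randomizedRisk o) := by
  unfold randomizedRisk
  rcases o with _ | _ | _ <;> simp only [Option.elim, Bool.false_eq_true, ↓reduceIte] <;> fun_prop

lemma measurable_committedExcessRisk (o : Option Bool) : Measurable (committedExcessRisk o) := by
  unfold committedExcessRisk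
  rcases o with _ | _ | _ <;> simp only [Option.elim, Bool.false_eq_true, ↓reduceIte] <;> fun_prop

lemma measurable_bayesRisk : Measurable bayesRisk := by
  unfold bayesRisk; fun_prop

lemma measurable_apply_option_bool {α β Z : Type*} [MeasurableSpace α] [MeasurableSpace β]
    [MeasurableSpace Z] {h : α → Option Bool} {f : α → β} {F : Option Bool → β → Z}
    (hF : ∀ o, Measurable (F o)) (hf : Measurable f)
    (hnone : MeasurableSet {x | h x = none}) (htrue : MeasurableSet {x | h x = some true}) :
    Measurable fun x => F (h x) (f x) := by
  have hsplit : (fun x => F (h x) (f x)) = fun x => if h x = none then F none (f x)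
      else if h x = some true then F (some true) (f x) else F (some false) (f x) := by
    funext x
    rcases h x with _ | _ | _ <;> simp
  rw [hsplit]
  exact ((hF _).comp hf).ite hnone (((hF _).comp hf).ite htrue ((hF _).comp hf))

lemma integrable_apply_option_bool {α : Type*} [MeasurableSpace α] (μ : Measure α)
    [IsFiniteMeasure μ] {h : α → Option Bool} {f : α → ℝ} {F : Option Bool → ℝ → ℝ}
    {s : Set ℝ} {C : ℝ} (hF : ∀ o, Measurable (F o)) (hf : Measurable f)
    (hnone : MeasurableSet {x | h x = none}) (htrue : MeasurableSet {x | h x = some true})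
    (hbound : ∀ o, ∀ p ∈ s, |F o p| ≤ C) (hfs : ∀ x, f x ∈ s) :
    Integrable (fun x => F (h x) (f x)) μ :=
  .of_bound (measurable_apply_option_bool hF hf hnone htrue).aestronglyMeasurable C
    (.of_forall fun x => hbound _ _ (hfs x))

theorem stmt_17_general {X : Type*} [MeasurableSpace X] (μ : Measure X) [IsProbabilityMeasure μ]
    (η : X → ℝ) (hη : Measurable η) (hη01 : ∀ x, η x ∈ Set.Icc (0 : ℝ) 1)
    (h : X → Option Bool)
    (hnone : MeasurableSet {x | h x = none})
    (htrue : MeasurableSet {x | h x = some true})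
    (γ ζ₀ : ℝ) (hζ0 : 0 ≤ ζ₀)
    (hproper : {x | h x = none} ⊆ {x | |η x - 1 / 2| ≤ γ}) :
    (∫ x, (h x).elim (1 / 2 : ℝ) (fun b => if b then 1 - η x else η x) ∂μ)
        - (∫ x, min (η x) (1 - η x) ∂μ)
      ≤ γ * (μ {x | ζ₀ < |η x - 1 / 2| ∧ |η x - 1 / 2| ≤ γ}).toReal + ζ₀
        + ∫ x, (h x).elim (0 : ℝ)
            (fun b => (if b then 1 - η x else η x) - min (η x) (1 - η x)) ∂μ := by
  set S : Set ℝ := {q | ζ₀ < |q - 1 / 2| ∧ |q - 1 / 2| ≤ γ}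
  have hS : MeasurableSet (η ⁻¹' S) := hη (by measurability)
  have hrr := integrable_apply_option_bool μ measurable_randomizedRisk hη hnone htrue
    abs_randomizedRisk_le_one hη01
  have hbr := integrable_apply_option_bool μ (F := fun _ => bayesRisk)
    (fun _ => measurable_bayesRisk) hη hnone htrue (fun _ _ => abs_bayesRisk_le_one) hη01
  have hce := integrable_apply_option_bool μ measurable_committedExcessRisk hη hnone htrue
    abs_committedExcessRisk_le_one hη01
  have hind : Integrable ((η ⁻¹' S).indicator fun _ => γ) μ := (integrable_const γ).indicator hS
  have hind_add : Integrable (fun x => (η ⁻¹' S).indicator (fun _ => γ) x + ζ₀) μ :=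
    hind.add (integrable_const ζ₀)
  change ∫ x, randomizedRisk (h x) (η x) ∂μ - ∫ x, bayesRisk (η x) ∂μ
    ≤ γ * μ.real (η ⁻¹' S) + ζ₀ + ∫ x, committedExcessRisk (h x) (η x) ∂μ
  calc ∫ x, randomizedRisk (h x) (η x) ∂μ - ∫ x, bayesRisk (η x) ∂μ
      = ∫ x, (randomizedRisk (h x) (η x) - bayesRisk (η x)) ∂μ := (integral_sub hrr hbr).symm
    _ ≤ ∫ x, ((η ⁻¹' S).indicator (fun _ => γ) x + ζ₀ + committedExcessRisk (h x) (η x)) ∂μ :=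
        integral_mono (hrr.sub hbr) (hind_add.add hce)
          fun x => randomizedRisk_sub_bayesRisk_le hζ0 fun hx => hproper hx
    _ = γ * μ.real (η ⁻¹' S) + ζ₀ + ∫ x, committedExcessRisk (h x) (η x) ∂μ := by
        rw [integral_add hind_add hce,
          integral_add hind (integrable_const ζ₀), integral_indicator_const _ hS, integral_const]
        simp [mul_comm]

/-- Three-term decomposition of the standard excess error under proper abstention
(the key step in handling the noise-seeking noise conditions).  For a measurable
classifier `h : X → {+1, -1, ⊥}` (encoded as `Option Bool`) whose abstention region is
contained in `{x | |η x - 1/2| ≤ γ}`, with `X_{ζ₀,γ} = {x | ζ₀ < |η x - 1/2| ≤ γ}`, the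
randomized version `č` satisfies
`err(č) - err(h⋆) ≤ γ·P(X_{ζ₀,γ}) + ζ₀ + E[1(h ≠ ⊥)·(misclass prob of h - Bayes)]`. -/
theorem stmt_17 {X : Type*} [MeasurableSpace X] (μ : Measure X) [IsProbabilityMeasure μ]
    (η : X → ℝ) (hη : Measurable η) (hη01 : ∀ x, η x ∈ Set.Icc (0 : ℝ) 1)
    (h : X → Option Bool)
    (hnone : MeasurableSet {x | h x = none})
    (htrue : MeasurableSet {x | h x = some true})
    (γ ζ₀ : ℝ) (hγ0 : 0 < γ) (hγ : γ < 1 / 2) (hζ0 : 0 ≤ ζ₀) (hζγ : ζ₀ < γ)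
    (hproper : {x | h x = none} ⊆ {x | |η x - 1 / 2| ≤ γ}) :
    (∫ x, (h x).elim (1 / 2 : ℝ) (fun b => if b then 1 - η x else η x) ∂μ)
        - (∫ x, min (η x) (1 - η x) ∂μ)
      ≤ γ * (μ {x | ζ₀ < |η x - 1 / 2| ∧ |η x - 1 / 2| ≤ γ}).toReal + ζ₀
        + ∫ x, (h x).elim (0 : ℝ)
            (fun b => (if b then 1 - η x else η x) - min (η x) (1 - η x)) ∂μ :=
  stmt_17_general μ η hη hη01 h hnone htrue γ ζ₀ hζ0 hproper
end

section
/- Under the active-set hypotheses, let (x_{g(1)}, …, x_{g(τ)}) be the subsequence of queried points (those rounds t with Q_t = 1), listed in time order. Fix j ∈ {1, …, τ} and ζ > 0 with w_{g(j)} > ζ. If there exist K pairwise disjoint subsequences of (x_{g(1)}, …, x_{g(j−1)}) such that x_{g(j)} is (ζ/2)-dependent (with respect to F and f⋆) on each of them, then K < 16β/ζ². -/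
/-!
Since the width at `x_t` exceeds `ζ`, the triangle inequality through `f⋆` gives some
`g` in the active set with `|g(x_t) - f⋆(x_t)| > ζ/2`. As `x_t` is `(ζ/2)`-dependent on each
`S_k`, the squared error of `g` on each `S_k` exceeds `ζ²/4`; by disjointness these add up to
more than `K ζ²/4`, while the active-set constraint caps the total queried squared error of `g`
at `4β`.
-/

open Finset

theorem exists_half_lt_abs_sub_of_lt_width_s18 {X : Type*} {G : Set (X → ℝ)} {fstar : X → ℝ}
    (hstar : fstar ∈ G) {x : X} {ζ : ℝ} (hw : ζ < width G x) :
    ∃ g ∈ G, ζ / 2 < |g x - fstar x| := by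
  have hne : {r : ℝ | ∃ f ∈ G, ∃ f' ∈ G, r = |f x - f' x|}.Nonempty :=
    ⟨0, fstar, hstar, fstar, hstar, by simp⟩
  obtain ⟨_, ⟨f, hf, f', hf', rfl⟩, hlt⟩ := exists_lt_of_lt_csSup hne hw
  by_contra! hsmall
  have htri := abs_sub_le (f x) (fstar x) (f' x)
  rw [abs_sub_comm (fstar x)] at htri
  linarith [hsmall f hf, hsmall f' hf']

theorem ZetaDep.sq_lt_sum_sq {X : Type*} {F : Set (X → ℝ)} {fstar : X → ℝ} {c : ℝ}
    {z : ℕ → X} {S : Finset ℕ} {x : X} (hdep : ZetaDep F fstar c z S x)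
    {g : X → ℝ} (hg : g ∈ F) (hgx : c < |g x - fstar x|) :
    c ^ 2 < ∑ i ∈ S, (g (z i) - fstar (z i)) ^ 2 := by
  by_contra! hsum
  exact (hdep g hg hsum).not_gt hgx

theorem Finset.card_mul_lt_sum_biUnion {ι α : Type*} [Fintype ι] [Nonempty ι] [DecidableEq α]
    {S : ι → Finset α} (hdisj : Pairwise fun k k' => Disjoint (S k) (S k'))
    {h : α → ℝ} {c : ℝ} (hc : ∀ k, c < ∑ i ∈ S k, h i) :
    Fintype.card ι * c < ∑ i ∈ univ.biUnion S, h i := by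
  rw [sum_biUnion fun k _ k' _ hkk' => hdisj hkk']
  calc Fintype.card ι * c = ∑ _k : ι, c := by simp
    _ < ∑ k, ∑ i ∈ S k, h i := sum_lt_sum_of_nonempty univ_nonempty fun k _ => hc k

theorem Finset.sum_le_sum_mul_of_subset {α : Type*} {U V : Finset α} (hUV : U ⊆ V)
    {Q h : α → ℝ} (hQU : ∀ i ∈ U, Q i = 1) (hQ : ∀ i, 0 ≤ Q i) (hh : ∀ i, 0 ≤ h i) :
    ∑ i ∈ U, h i ≤ ∑ i ∈ V, Q i * h i :=
  calc ∑ i ∈ U, h i = ∑ i ∈ U, Q i * h i := sum_congr rfl fun i hi => by rw [hQU i hi, one_mul]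
    _ ≤ ∑ i ∈ V, Q i * h i :=
      sum_le_sum_of_subset_of_nonneg hUV fun i _ _ => mul_nonneg (hQ i) (hh i)

theorem stmt_18_general {X : Type*} (F : Set (X → ℝ))
    (fstar : X → ℝ)
    (T : ℕ) (x : ℕ → X) (Q : ℕ → ℝ) (hQ : ∀ t, Q t = 0 ∨ Q t = 1)
    (β : ℝ) (hβ : 0 < β)
    (Fs : ℕ → Set (X → ℝ)) (hFsub : ∀ t, Fs t ⊆ F) (hFstar : ∀ t, fstar ∈ Fs t)
    (hFbound : ∀ t, 1 ≤ t → t ≤ T → ∀ f ∈ Fs t,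
      ∑ i ∈ Finset.Icc 1 (t - 1), Q i * (f (x i) - fstar (x i)) ^ 2 ≤ 4 * β)
    (ζ : ℝ) (hζ : 0 < ζ)
    (t : ℕ) (ht1 : 1 ≤ t) (htT : t ≤ T)
    (hw : ζ < width (Fs t) (x t))
    (K : ℕ) (S : Fin K → Finset ℕ)
    (hSidx : ∀ k, ∀ i ∈ S k, 1 ≤ i ∧ i < t ∧ Q i = 1)
    (hSdisj : ∀ k k', k ≠ k' → Disjoint (S k) (S k'))
    (hSdep : ∀ k, ZetaDep F fstar (ζ / 2) x (S k) (x t)) :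
    (K : ℝ) < 16 * β / ζ ^ 2 := by
  classical
  rcases K.eq_zero_or_pos with rfl | hK
  · simpa using by positivity
  have : Nonempty (Fin K) := Fin.pos_iff_nonempty.mp hK
  obtain ⟨g, hg, hgx⟩ := exists_half_lt_abs_sub_of_lt_width_s18 (hFstar t) hw
  have hcount := card_mul_lt_sum_biUnion (h := fun i => (g (x i) - fstar (x i)) ^ 2) hSdisj
    fun k => (hSdep k).sq_lt_sum_sq (hFsub t hg) hgx
  have hU : univ.biUnion S ⊆ Icc 1 (t - 1) := fun i hi => by
    obtain ⟨k, -, hk⟩ := mem_biUnion.mp hi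
    obtain ⟨h1, h2, -⟩ := hSidx k i hk
    exact mem_Icc.mpr ⟨h1, by omega⟩
  have hqueried := sum_le_sum_mul_of_subset (h := fun i => (g (x i) - fstar (x i)) ^ 2) hU
    (fun i hi => by obtain ⟨k, -, hk⟩ := mem_biUnion.mp hi; exact (hSidx k i hk).2.2)
    (fun i => by rcases hQ i with h | h <;> simp [h]) (fun i => sq_nonneg _)
  rw [Fintype.card_fin] at hcount
  rw [lt_div_iff₀ (by positivity)]
  linarith [hFbound t ht1 htT g hg]

/-- First claim in the proof of the eluder-dimension width-counting lemma: under the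
active-set hypotheses, if `t` is a queried round (`Q_t = 1`) with width `w_t > ζ`, and
`S₁, …, S_K` are pairwise disjoint sets of earlier queried indices such that `x_t` is
`(ζ/2)`-dependent on each corresponding subsequence, then `K < 16β/ζ²`. -/
theorem stmt_18 {X : Type*} (F : Set (X → ℝ))
    (hFb : ∀ f ∈ F, ∀ v, f v ∈ Set.Icc (0 : ℝ) 1)
    (fstar : X → ℝ) (hstar : fstar ∈ F)
    (T : ℕ) (x : ℕ → X) (Q : ℕ → ℝ) (hQ : ∀ t, Q t = 0 ∨ Q t = 1)
    (β : ℝ) (hβ : 0 < β)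
    (Fs : ℕ → Set (X → ℝ)) (hFsub : ∀ t, Fs t ⊆ F) (hFstar : ∀ t, fstar ∈ Fs t)
    (hFbound : ∀ t, 1 ≤ t → t ≤ T → ∀ f ∈ Fs t,
      ∑ i ∈ Finset.Icc 1 (t - 1), Q i * (f (x i) - fstar (x i)) ^ 2 ≤ 4 * β)
    (ζ : ℝ) (hζ : 0 < ζ)
    (t : ℕ) (ht1 : 1 ≤ t) (htT : t ≤ T) (hQt : Q t = 1)
    (hw : ζ < width (Fs t) (x t))
    (K : ℕ) (S : Fin K → Finset ℕ)
    (hSidx : ∀ k, ∀ i ∈ S k, 1 ≤ i ∧ i < t ∧ Q i = 1)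
    (hSdisj : ∀ k k', k ≠ k' → Disjoint (S k) (S k'))
    (hSdep : ∀ k, ZetaDep F fstar (ζ / 2) x (S k) (x t)) :
    (K : ℝ) < 16 * β / ζ ^ 2 :=
  stmt_18_general F fstar T x Q hQ β hβ Fs hFsub hFstar hFbound ζ hζ t ht1 htT hw K S hSidx hSdisj
    hSdep
end

section
/- Let F be a set of functions X → [0,1] containing f⋆, and let x_t ∈ X, y_t ∈ [0,1], Q_t ∈ {0,1} for t ∈ ℕ be given. Set M_t(f) := Q_t·((f(x_t) − y_t)² − (f⋆(x_t) − y_t)²) and e_t(f) := Q_t·(f(x_t) − f⋆(x_t))². Assume, for a constant C > 0, that for every f ∈ F and every τ ∈ ℕ: Σ_{t=1}^{τ} M_t(f) ≤ (3/2)·Σ_{t=1}^{τ} e_t(f) + C and Σ_{t=1}^{τ} e_t(f) ≤ 2·Σ_{t=1}^{τ} M_t(f) + C. Define R̂_τ(f) := Σ_{t<τ} Q_t·(f(x_t) − y_t)², let f̂_τ ∈ F be a minimizer of R̂_τ over F (assumed to exist), set β := C/2, and F_τ := {f ∈ F : R̂_τ(f) ≤ R̂_τ(f̂_τ) + β}.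 Then for every τ ∈ ℕ: (1) f⋆ ∈ F_τ; (2) every f ∈ F_τ satisfies Σ_{t<τ} e_t(f) ≤ 2C, i.e., Σ_{t<τ} Q_t·(f(x_t) − f⋆(x_t))² ≤ 4β. -/
/-! The second concentration inequality, read on the rounds `1, …, τ - 1`, says that the
error `e(f) = Σ_{t<τ} Q_t (f(x_t) - f⋆(x_t))²` is at most `2 (R̂_τ(f) - R̂_τ(f⋆)) + C`.
Applied to the empirical minimizer `f̂_τ`, nonnegativity of `e` gives
`R̂_τ(f⋆) ≤ R̂_τ(f̂_τ) + C/2`, i.e. `f⋆ ∈ F_τ`. For `f ∈ F_τ`, minimality of `f̂_τ` gives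
`R̂_τ(f) - R̂_τ(f⋆) ≤ R̂_τ(f) - R̂_τ(f̂_τ) ≤ C/2`, hence `e(f) ≤ 2C`. -/

theorem stmt_19_general {X : Type*} (F : Set (X → ℝ)) (fstar : X → ℝ) (hstar : fstar ∈ F)
    (x : ℕ → X) (y Q : ℕ → ℝ)
    (hQ : ∀ t, Q t = 0 ∨ Q t = 1)
    (C : ℝ)
    (hconc : ∀ f ∈ F, ∀ τ : ℕ,
      ((∑ t ∈ Finset.Icc 1 τ,
          Q t * ((f (x t) - y t) ^ 2 - (fstar (x t) - y t) ^ 2))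
        ≤ (3 / 2) * (∑ t ∈ Finset.Icc 1 τ, Q t * (f (x t) - fstar (x t)) ^ 2) + C)
      ∧ ((∑ t ∈ Finset.Icc 1 τ, Q t * (f (x t) - fstar (x t)) ^ 2)
        ≤ 2 * (∑ t ∈ Finset.Icc 1 τ,
            Q t * ((f (x t) - y t) ^ 2 - (fstar (x t) - y t) ^ 2)) + C))
    (Rhat : ℕ → (X → ℝ) → ℝ)
    (hRhat : ∀ τ f, Rhat τ f = ∑ t ∈ Finset.Ico 1 τ, Q t * (f (x t) - y t) ^ 2)
    (fhat : ℕ → (X → ℝ)) (hfhatF : ∀ τ, fhat τ ∈ F)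
    (hfhatmin : ∀ τ, ∀ f ∈ F, Rhat τ (fhat τ) ≤ Rhat τ f)
    (β : ℝ) (hβ : β = C / 2)
    (Fτ : ℕ → Set (X → ℝ))
    (hFτ : ∀ τ, Fτ τ = {f ∈ F | Rhat τ f ≤ Rhat τ (fhat τ) + β}) :
    ∀ τ : ℕ, fstar ∈ Fτ τ
      ∧ ∀ f ∈ Fτ τ,
          (∑ t ∈ Finset.Ico 1 τ, Q t * (f (x t) - fstar (x t)) ^ 2 ≤ 2 * C)
          ∧ (∑ t ∈ Finset.Ico 1 τ, Q t * (f (x t) - fstar (x t)) ^ 2 ≤ 4 * β) := by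
  intro τ
  set e : (X → ℝ) → ℝ := fun f ↦ ∑ t ∈ Finset.Ico 1 τ, Q t * (f (x t) - fstar (x t)) ^ 2
  have he_nonneg (f : X → ℝ) : 0 ≤ e f := Finset.sum_nonneg fun t _ ↦
    mul_nonneg (by rcases hQ t with h | h <;> simp [h]) (sq_nonneg _)
  have hIco : Finset.Ico 1 τ = Finset.Icc 1 (τ - 1) := by
    ext t
    simp only [Finset.mem_Ico, Finset.mem_Icc]
    omega
  have hexcess (f : X → ℝ) : ∑ t ∈ Finset.Ico 1 τ,
      Q t * ((f (x t) - y t) ^ 2 - (fstar (x t) - y t) ^ 2) = Rhat τ f - Rhat τ fstar := by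
    simp only [hRhat, ← Finset.sum_sub_distrib, mul_sub]
  have he_le (f : X → ℝ) (hf : f ∈ F) : e f ≤ 2 * (Rhat τ f - Rhat τ fstar) + C := by
    simpa only [e, hIco, ← hexcess] using (hconc f hf (τ - 1)).2
  have hstar_mem : fstar ∈ Fτ τ := by
    rw [hFτ]
    exact ⟨hstar, by linarith [he_nonneg (fhat τ), he_le (fhat τ) (hfhatF τ)]⟩
  refine ⟨hstar_mem, fun f hf ↦ ?_⟩
  rw [hFτ] at hf
  obtain ⟨hfF, hf_near_min⟩ := hf
  have hmin := hfhatmin τ fstar hstar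
  have hf_error := he_le f hfF
  constructor <;> linarith

/-- Deterministic properties of the per-round active sets of the
constant-label-complexity algorithm, on the anytime concentration event.
`M_t(f) = Q_t·((f(x_t) - y_t)² - (f⋆(x_t) - y_t)²)` and
`e_t(f) = Q_t·(f(x_t) - f⋆(x_t))²` satisfy the two anytime inequalities with constant
`C`; `R̂_τ(f) = Σ_{t<τ} Q_t (f(x_t) - y_t)²`, `f̂_τ` minimizes `R̂_τ` over `F`,
`β = C/2`, and `F_τ = {f ∈ F | R̂_τ(f) ≤ R̂_τ(f̂_τ) + β}`.  Then for every `τ`: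
(1) `f⋆ ∈ F_τ`; (2) every `f ∈ F_τ` satisfies
`Σ_{t<τ} Q_t·(f(x_t) - f⋆(x_t))² ≤ 2C = 4β`. -/
theorem stmt_19 {X : Type*} (F : Set (X → ℝ)) (fstar : X → ℝ) (hstar : fstar ∈ F)
    (hFb : ∀ f ∈ F, ∀ z, f z ∈ Set.Icc (0 : ℝ) 1)
    (x : ℕ → X) (y Q : ℕ → ℝ) (hy : ∀ t, y t ∈ Set.Icc (0 : ℝ) 1)
    (hQ : ∀ t, Q t = 0 ∨ Q t = 1)
    (C : ℝ) (hC : 0 < C)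
    (hconc : ∀ f ∈ F, ∀ τ : ℕ,
      ((∑ t ∈ Finset.Icc 1 τ,
          Q t * ((f (x t) - y t) ^ 2 - (fstar (x t) - y t) ^ 2))
        ≤ (3 / 2) * (∑ t ∈ Finset.Icc 1 τ, Q t * (f (x t) - fstar (x t)) ^ 2) + C)
      ∧ ((∑ t ∈ Finset.Icc 1 τ, Q t * (f (x t) - fstar (x t)) ^ 2)
        ≤ 2 * (∑ t ∈ Finset.Icc 1 τ,
            Q t * ((f (x t) - y t) ^ 2 - (fstar (x t) - y t) ^ 2)) + C))
    (Rhat : ℕ → (X → ℝ) → ℝ)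
    (hRhat : ∀ τ f, Rhat τ f = ∑ t ∈ Finset.Ico 1 τ, Q t * (f (x t) - y t) ^ 2)
    (fhat : ℕ → (X → ℝ)) (hfhatF : ∀ τ, fhat τ ∈ F)
    (hfhatmin : ∀ τ, ∀ f ∈ F, Rhat τ (fhat τ) ≤ Rhat τ f)
    (β : ℝ) (hβ : β = C / 2)
    (Fτ : ℕ → Set (X → ℝ))
    (hFτ : ∀ τ, Fτ τ = {f ∈ F | Rhat τ f ≤ Rhat τ (fhat τ) + β}) :
    ∀ τ : ℕ, fstar ∈ Fτ τ
      ∧ ∀ f ∈ Fτ τ,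
          (∑ t ∈ Finset.Ico 1 τ, Q t * (f (x t) - fstar (x t)) ^ 2 ≤ 2 * C)
          ∧ (∑ t ∈ Finset.Ico 1 τ, Q t * (f (x t) - fstar (x t)) ^ 2 ≤ 4 * β) :=
  stmt_19_general F fstar hstar x y Q hQ C hconc Rhat hRhat fhat hfhatF hfhatmin β hβ Fτ hFτ
end
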